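/- arXiv:1110.3699 — 6 statements merged into one kernel-verified Lean document; each statement's English description precedes it below -/
import Mathlib

section
/- Let L be a finite-dimensional solvable Lie algebra over a field, and let A be a minimal ideal of L with C_L(A) = A (A is self-centralising). Then A is abelian and A has a complement in L, i.e. there is a subalgebra M with L = A ⊕ M (vector space direct sum) and A ∩ M = 0. -/
/-!
Let `B` be an ideal covering `A`. Solvability gives `⁅B, B⁆ ≤ A`, and since `A` is
self-centralising, `⁅B, A⁆ = A`. Hence the operators `ad b` on `A` (`b ∈ B`) commute and their
images span `A`, so Nakayama's lemma over the commutative algebra they generate writes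
`1 = ∑ₖ Tₖ ∘ ad xₖ` on `A`, with `xₖ ∈ B` and every `Tₖ` commuting with every `ad b`.
This identity is a contracting homotopy: `π b = ∑ₖ Tₖ ⁅xₖ, b⁆` projects `B` onto `A`, its kernel
`X` is an abelian subalgebra, and for `l ∈ L` the cocycle `b ↦ π ⁅l, b⁆ - ⁅l, π b⁆` is a
coboundary `b ↦ ⁅b, a⁆`, which puts `l + a` into the normaliser of `X`. That normaliser meets `A`
only in `B`-invariants of `A`, and the identity kills those.
-/

open scoped IsMulCommutative in
theorem Module.End.exists_sum_mul_eq_one_of_iSup_range_eq_top {R V ι : Type*} [CommRing R]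
    [AddCommGroup V] [Module R V] [Module.Finite R V] (ρ : ι → Module.End R V)
    (hcomm : ∀ i j, Commute (ρ i) (ρ j)) (hspan : ⨆ i, LinearMap.range (ρ i) = ⊤) :
    ∃ (s : Finset ι) (T : ι → Module.End R V),
      (∀ k i, Commute (T k) (ρ i)) ∧ ∑ k ∈ s, T k * ρ k = 1 := by
  set C := Algebra.adjoin R (Set.range ρ)
  have : IsMulCommutative C := Algebra.isMulCommutative_adjoin R <| by
    rintro _ ⟨i, rfl⟩ _ ⟨j, rfl⟩; exact hcomm i j
  let ρC : ι → C := fun i => ⟨ρ i, Algebra.subset_adjoin ⟨i, rfl⟩⟩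
  have : Module.Finite C V := Module.Finite.of_restrictScalars_finite R C V
  set I : Ideal C := Ideal.span (Set.range ρC)
  have hI : (⊤ : Submodule C V) ≤ I • ⊤ := by
    have : ⨆ i, LinearMap.range (ρ i) ≤ (I • (⊤ : Submodule C V)).restrictScalars R :=
      iSup_le fun i => by
        rintro _ ⟨w, rfl⟩
        exact (Submodule.smul_mem_smul (Ideal.subset_span ⟨i, rfl⟩) trivial : ρC i • w ∈ I • ⊤)
    exact fun v _ => this (hspan ▸ trivial)
  obtain ⟨r, hrI, hr⟩ := Submodule.exists_mem_and_smul_eq_self_of_fg_of_le_smul I ⊤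
    (Module.finite_def.mp inferInstance) hI
  have hr1 : r = 1 := Subtype.ext <| LinearMap.ext fun v => hr v trivial
  obtain ⟨c, hc⟩ := Finsupp.mem_span_range_iff_exists_finsupp.mp (hr1 ▸ hrI)
  refine ⟨c.support, fun k => (c k : Module.End R V), fun k i => ?_, ?_⟩
  · exact congrArg Subtype.val (mul_comm (c k) (ρC i))
  · simpa [Finsupp.sum] using congrArg Subtype.val hc

namespace LieIdeal

variable {R L : Type*} [CommRing R] [LieRing L] [LieAlgebra R L]

open LieModule LieAlgebra

structure IdentitySplitting (A B : LieIdeal R L) where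
  support : Finset B
  coeff : B → Module.End R A
  commute_coeff : ∀ k (b : B), Commute (coeff k) (toEnd R L A b)
  sum_eq_one : ∑ k ∈ support, coeff k * toEnd R L A k = 1

variable {A B : LieIdeal R L}

theorem lie_eq_zero_of_mem (hA : ⁅A, A⁆ = ⊥) {a a' : L} (ha : a ∈ A) (ha' : a' ∈ A) :
    ⁅a, a'⁆ = 0 := by
  simpa [hA] using LieSubmodule.lie_mem_lie ha ha'

theorem commute_toEnd (hA : ⁅A, A⁆ = ⊥) (hBB : ⁅B, B⁆ ≤ A) (b b' : B) :
    Commute (toEnd R L A b) (toEnd R L A b') := by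
  ext v
  have h := lie_eq_zero_of_mem hA (hBB (LieSubmodule.lie_mem_lie b.2 b'.2)) v.2
  rw [lie_lie, sub_eq_zero] at h
  simpa using h

theorem iSup_range_toEnd_eq_top (hBA : A ≤ ⁅B, A⁆) :
    ⨆ b : B, LinearMap.range (toEnd R L A b) = ⊤ := by
  set W := ⨆ b : B, LinearMap.range (toEnd R L A b)
  have h : A.toSubmodule ≤ W.map A.toSubmodule.subtype := by
    refine ((LieSubmodule.toSubmodule_le_toSubmodule _ _).mpr hBA).trans ?_
    rw [LieSubmodule.lieIdeal_oper_eq_linear_span, Submodule.span_le]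
    rintro _ ⟨b, a, rfl⟩
    exact ⟨toEnd R L A b a, Submodule.mem_iSup_of_mem b ⟨a, rfl⟩, rfl⟩
  refine eq_top_iff.mpr fun v _ => ?_
  obtain ⟨w, hw, hwv⟩ := h v.2
  rwa [Subtype.ext hwv] at hw

theorem nonempty_identitySplitting [Module.Finite R A] (hA : ⁅A, A⁆ = ⊥) (hBB : ⁅B, B⁆ ≤ A)
    (hBA : A ≤ ⁅B, A⁆) : Nonempty (IdentitySplitting A B) :=
  let ⟨s, T, hT, hsum⟩ := Module.End.exists_sum_mul_eq_one_of_iSup_range_eq_top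
    (fun b : B => toEnd R L A b) (commute_toEnd hA hBB) (iSup_range_toEnd_eq_top hBA)
  ⟨⟨s, T, hT, hsum⟩⟩

namespace IdentitySplitting

variable (σ : IdentitySplitting A B)

theorem sum_coeff_toEnd (v : A) : ∑ k ∈ σ.support, σ.coeff k (toEnd R L A k v) = v := by
  simpa [Module.End.mul_apply] using LinearMap.congr_fun σ.sum_eq_one v

theorem toEnd_sum_coeff (b : B) (w : B → A) :
    toEnd R L A b (∑ k ∈ σ.support, σ.coeff k (w k)) =
      ∑ k ∈ σ.support, σ.coeff k (toEnd R L A b (w k)) := by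
  simp only [map_sum, ← Module.End.mul_apply, (σ.commute_coeff _ b).eq]

theorem toEnd_sum_coeff_of_symm (c : B → A)
    (hc : ∀ b b' : B, toEnd R L A b (c b') = toEnd R L A b' (c b)) (b : B) :
    toEnd R L A b (∑ k ∈ σ.support, σ.coeff k (c k)) = c b := by
  simp only [σ.toEnd_sum_coeff, hc b]
  exact σ.sum_coeff_toEnd (c b)

def proj (hBB : ⁅B, B⁆ ≤ A) : B →ₗ[R] A :=
  ∑ k ∈ σ.support, σ.coeff k ∘ₗ ((toEnd R L L k ∘ₗ B.toSubmodule.subtype).codRestrict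
    A.toSubmodule fun b => hBB (LieSubmodule.lie_mem_lie k.2 b.2))

variable (hBB : ⁅B, B⁆ ≤ A)

theorem proj_apply (b : B) : σ.proj hBB b = ∑ k ∈ σ.support,
    σ.coeff k ⟨⁅(k : L), (b : L)⁆, hBB (LieSubmodule.lie_mem_lie k.2 b.2)⟩ := by
  simp only [proj, LinearMap.sum_apply, LinearMap.comp_apply]
  rfl

theorem proj_eq_self (b : B) (hb : (b : L) ∈ A) : σ.proj hBB b = ⟨b, hb⟩ := by
  rw [proj_apply]
  exact σ.sum_coeff_toEnd ⟨b, hb⟩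

theorem lie_eq_lie_proj_sub (b b' : B) :
    ⁅(b : L), (b' : L)⁆ = ⁅(b : L), (σ.proj hBB b' : L)⁆ - ⁅(b' : L), (σ.proj hBB b : L)⁆ := by
  have key : toEnd R L A b (σ.proj hBB b') - toEnd R L A b' (σ.proj hBB b) =
      ⟨⁅(b : L), (b' : L)⁆, hBB (LieSubmodule.lie_mem_lie b.2 b'.2)⟩ := by
    rw [proj_apply, proj_apply, toEnd_sum_coeff, toEnd_sum_coeff, ← Finset.sum_sub_distrib,
      ← σ.sum_coeff_toEnd ⟨_, hBB (LieSubmodule.lie_mem_lie b.2 b'.2)⟩]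
    refine Finset.sum_congr rfl fun k _ => ?_
    rw [← map_sub]
    congr 1
    ext
    simp only [LieSubmodule.coe_sub, toEnd_apply_apply, LieSubmodule.coe_bracket]
    rw [leibniz_lie (k : L), ← lie_skew (b' : L)]
    abel
  simpa using congrArg Subtype.val key.symm

def adCommutator (l : L) (b : B) : A :=
  σ.proj hBB ⟨⁅l, (b : L)⁆, B.lie_mem b.2⟩ - ⟨⁅l, (σ.proj hBB b : L)⁆, A.lie_mem (σ.proj hBB b).2⟩

theorem toEnd_adCommutator_comm (l : L) (b b' : B) :
    toEnd R L A b (σ.adCommutator hBB l b') = toEnd R L A b' (σ.adCommutator hBB l b) := by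
  ext
  have h₁ := σ.lie_eq_lie_proj_sub hBB b ⟨⁅l, (b' : L)⁆, B.lie_mem b'.2⟩
  have h₂ := σ.lie_eq_lie_proj_sub hBB b' ⟨⁅l, (b : L)⁆, B.lie_mem b.2⟩
  have h₃ := congrArg (⁅l, ·⁆) (σ.lie_eq_lie_proj_sub hBB b b')
  simp only [lie_sub, leibniz_lie l] at h₁ h₂ h₃
  simp only [adCommutator, toEnd_apply_apply, LieSubmodule.coe_bracket, LieSubmodule.coe_sub,
    lie_sub]
  rw [← lie_skew ⁅l, (b : L)⁆ (b' : L)] at h₃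
  linear_combination (norm := abel) h₂ + h₃ - h₁

def kerProj : LieSubalgebra R L where
  toSubmodule := (LinearMap.ker (σ.proj hBB)).map B.toSubmodule.subtype
  lie_mem' := by
    rintro _ _ ⟨y, hy, rfl⟩ ⟨y', hy', rfl⟩
    have h : ⁅(y : L), (y' : L)⁆ = 0 := by
      rw [σ.lie_eq_lie_proj_sub hBB y y', LinearMap.mem_ker.mp hy, LinearMap.mem_ker.mp hy']
      simp
    exact h ▸ Submodule.zero_mem _

theorem mem_kerProj {y : L} : y ∈ σ.kerProj hBB ↔ ∃ hy : y ∈ B, σ.proj hBB ⟨y, hy⟩ = 0 := by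
  constructor
  · rintro ⟨z, hz, rfl⟩
    exact ⟨z.2, hz⟩
  · rintro ⟨hy, h⟩
    exact ⟨⟨y, hy⟩, h, rfl⟩

variable {σ hBB} in
theorem eq_zero_of_mem_kerProj_of_mem {y : L} (hy : y ∈ σ.kerProj hBB) (hyA : y ∈ A) : y = 0 := by
  obtain ⟨hyB, h⟩ := (σ.mem_kerProj hBB).mp hy
  rw [σ.proj_eq_self hBB _ hyA] at h
  exact congrArg Subtype.val h

theorem sub_proj_mem_kerProj (hAB : A ≤ B) (b : B) :
    (b : L) - σ.proj hBB b ∈ σ.kerProj hBB := by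
  refine (σ.mem_kerProj hBB).mpr ⟨B.sub_mem b.2 (hAB (σ.proj hBB b).2), ?_⟩
  have h : (⟨b - σ.proj hBB b, _⟩ : B) = b - ⟨σ.proj hBB b, hAB (σ.proj hBB b).2⟩ := rfl
  rw [h, map_sub, σ.proj_eq_self hBB ⟨_, hAB (σ.proj hBB b).2⟩ (σ.proj hBB b).2, sub_self]

theorem disjoint_normalizer_kerProj (hA : ⁅A, A⁆ = ⊥) (hAB : A ≤ B) :
    Disjoint A.toSubmodule (σ.kerProj hBB).normalizer.toSubmodule := by
  rw [Submodule.disjoint_def]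
  intro x hxA hxN
  have hcomm : ∀ b : B, toEnd R L A b ⟨x, hxA⟩ = 0 := by
    intro b
    have h := eq_zero_of_mem_kerProj_of_mem
      ((LieSubalgebra.mem_normalizer_iff _ x).mp hxN _ (σ.sub_proj_mem_kerProj hBB hAB b))
      (lie_mem_left R L A _ _ hxA)
    rw [lie_sub, lie_eq_zero_of_mem hA hxA (σ.proj hBB b).2, sub_zero] at h
    ext
    rw [toEnd_apply_apply, LieSubmodule.coe_bracket, ← lie_skew, h, neg_zero, ZeroMemClass.coe_zero]
  simpa [hcomm] using (σ.sum_coeff_toEnd ⟨x, hxA⟩).symm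

theorem codisjoint_normalizer_kerProj (hAB : A ≤ B) :
    Codisjoint A.toSubmodule (σ.kerProj hBB).normalizer.toSubmodule := by
  rw [Submodule.codisjoint_iff_exists_add_eq]
  intro l
  set a := ∑ k ∈ σ.support, σ.coeff k (σ.adCommutator hBB l k)
  have ha : ∀ b : B, toEnd R L A b a = σ.adCommutator hBB l b :=
    σ.toEnd_sum_coeff_of_symm _ (σ.toEnd_adCommutator_comm hBB l)
  refine ⟨-a, l + a, neg_mem a.2, ?_, by abel⟩
  refine (LieSubalgebra.mem_normalizer_iff _ _).mpr fun y hy => ?_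
  obtain ⟨hyB, hy0⟩ := (σ.mem_kerProj hBB).mp hy
  refine (σ.mem_kerProj hBB).mpr ⟨B.lie_mem hyB, ?_⟩
  have e₁ : σ.proj hBB ⟨⁅l, y⁆, B.lie_mem hyB⟩ = σ.adCommutator hBB l ⟨y, hyB⟩ := by
    simp only [adCommutator, hy0, ZeroMemClass.coe_zero, lie_zero]
    exact (sub_zero _).symm
  have e₂ : σ.proj hBB ⟨⁅(a : L), y⁆, hAB (lie_mem_left R L A _ _ a.2)⟩ =
      -σ.adCommutator hBB l ⟨y, hyB⟩ := by
    rw [σ.proj_eq_self hBB _ (lie_mem_left R L A _ _ a.2), ← ha]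
    ext
    simp only [toEnd_apply_apply, LieSubmodule.coe_bracket, NegMemClass.coe_neg]
    exact (lie_skew _ _).symm
  have h : (⟨⁅l + a, y⁆, B.lie_mem hyB⟩ : B) =
      ⟨⁅l, y⁆, B.lie_mem hyB⟩ + ⟨⁅(a : L), y⁆, hAB (lie_mem_left R L A _ _ a.2)⟩ :=
    Subtype.ext (add_lie _ _ _)
  rw [h, map_add, e₁, e₂, add_neg_cancel]

theorem isCompl_normalizer_kerProj (hA : ⁅A, A⁆ = ⊥) (hAB : A ≤ B) :
    IsCompl A.toSubmodule (σ.kerProj hBB).normalizer.toSubmodule :=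
  ⟨σ.disjoint_normalizer_kerProj hBB hA hAB, σ.codisjoint_normalizer_kerProj hBB hAB⟩

end IdentitySplitting

theorem exists_isCompl_of_le_lie [Module.Finite R A] (hA : ⁅A, A⁆ = ⊥) (hBB : ⁅B, B⁆ ≤ A)
    (hBA : A ≤ ⁅B, A⁆) : ∃ M : LieSubalgebra R L, IsCompl A.toSubmodule M.toSubmodule :=
  let ⟨σ⟩ := nonempty_identitySplitting hA hBB hBA
  ⟨_, σ.isCompl_normalizer_kerProj hBB hA (hBA.trans (LieSubmodule.lie_le_left B A))⟩

theorem sup_lie_sup_le (A I : LieIdeal R L) : ⁅A ⊔ I, A ⊔ I⁆ ≤ A ⊔ ⁅I, I⁆ := by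
  rw [LieSubmodule.sup_lie, LieSubmodule.lie_sup, LieSubmodule.lie_sup]
  refine sup_le (sup_le ?_ ?_) (sup_le ?_ le_sup_right) <;> refine le_sup_of_le_left ?_
  exacts [LieSubmodule.lie_le_left A A, LieSubmodule.lie_le_left A I, LieSubmodule.lie_le_right A I]

theorem le_of_le_sup_lie_self [IsSolvable L] (h : B ≤ A ⊔ ⁅B, B⁆) : B ≤ A := by
  have hk : ∀ k, B ≤ A ⊔ derivedSeriesOfIdeal R L k B := by
    intro k
    induction k with
    | zero => exact le_sup_right
    | succ k ih =>
      calc B ≤ A ⊔ ⁅B, B⁆ := h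
        _ ≤ A ⊔ (A ⊔ ⁅derivedSeriesOfIdeal R L k B, derivedSeriesOfIdeal R L k B⁆) :=
          sup_le_sup_left ((LieSubmodule.mono_lie ih ih).trans (sup_lie_sup_le A _)) A
        _ = A ⊔ derivedSeriesOfIdeal R L (k + 1) B := by
          rw [← sup_assoc, sup_idem, derivedSeriesOfIdeal_succ]
  obtain ⟨k, hk0⟩ := IsSolvable.solvable R L
  have hDk : derivedSeriesOfIdeal R L k B = ⊥ :=
    eq_bot_iff.mpr (hk0 ▸ derivedSeriesOfIdeal_mono le_top k)
  simpa [hDk] using hk k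

theorem lie_le_of_covBy [IsSolvable L] (h : A ⋖ B) : ⁅B, B⁆ ≤ A := by
  by_contra hBB
  have hsup : A ⊔ ⁅B, B⁆ = B :=
    (h.eq_or_eq le_sup_left (sup_le h.le (LieSubmodule.lie_le_left B B))).resolve_left
      fun e => hBB (le_sup_right.trans e.le)
  exact h.lt.not_ge (le_of_le_sup_lie_self hsup.ge)

theorem le_lie_of_lt (hA : IsAtom A) (hself : ∀ x : L, (∀ a ∈ A, ⁅x, a⁆ = 0) → x ∈ A)
    (h : A < B) : A ≤ ⁅B, A⁆ := by
  rcases hA.le_iff.mp (LieSubmodule.lie_le_right A B) with h0 | h1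
  · refine absurd (fun b hb => hself b fun a ha => ?_) h.not_ge
    simpa [h0] using LieSubmodule.lie_mem_lie hb ha
  · exact h1.ge

theorem lie_self_eq_bot_of_isAtom [IsSolvable L] (hA : IsAtom A) : ⁅A, A⁆ = ⊥ :=
  (hA.le_iff.mp (LieSubmodule.lie_le_left A A)).resolve_right fun h =>
    hA.1 (le_bot_iff.mp (le_of_le_sup_lie_self (by rw [bot_sup_eq, h])))

theorem exists_isCompl_of_isAtom [IsArtinian R L] [IsNoetherian R L] [IsSolvable L]
    (hA : IsAtom A) (hself : ∀ x : L, (∀ a ∈ A, ⁅x, a⁆ = 0) → x ∈ A) :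
    ∃ M : LieSubalgebra R L, IsCompl A.toSubmodule M.toSubmodule := by
  by_cases htop : A = ⊤
  · exact ⟨⊥, by simpa [htop] using isCompl_top_bot⟩
  have := LieSubmodule.wellFoundedLT_of_isArtinian R L L
  obtain ⟨B, hAB⟩ := exists_covBy_of_wellFoundedLT (not_isMax_iff_ne_top.mpr htop)
  exact exists_isCompl_of_le_lie (lie_self_eq_bot_of_isAtom hA) (lie_le_of_covBy hAB)
    (le_lie_of_lt hA hself hAB.lt)

end LieIdeal

/-- If `A` is a self-centralising minimal ideal of a finite-dimensional solvable Lie algebra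
`L`, then `A` is abelian and `A` is complemented in `L` by a subalgebra `M`. -/
theorem minimal_selfCentralising_ideal_is_complemented (F : Type*) [Field F]
    (L : Type*) [LieRing L] [LieAlgebra F L] [FiniteDimensional F L]
    [LieAlgebra.IsSolvable L]
    (A : LieIdeal F L) (hA : IsAtom A)
    (hself : ∀ x : L, (∀ a ∈ A, ⁅x, a⁆ = 0) ↔ x ∈ A) :
    (∀ a ∈ A, ∀ b ∈ A, ⁅a, b⁆ = 0) ∧
    ∃ M : LieSubalgebra F L,
      (∀ x : L, ∃ a ∈ A, ∃ m ∈ M, x = a + m) ∧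
      (∀ x : L, x ∈ A → x ∈ M → x = 0) := by
  obtain ⟨M, hM⟩ := LieIdeal.exists_isCompl_of_isAtom hA fun x => (hself x).mp
  refine ⟨(LieSubmodule.lie_eq_bot_iff A A).mp (LieIdeal.lie_self_eq_bot_of_isAtom hA), M,
    fun x => ?_, Submodule.disjoint_def.mp hM.disjoint⟩
  obtain ⟨a, m, ha, hm, rfl⟩ := Submodule.codisjoint_iff_exists_add_eq.mp hM.codisjoint x
  exact ⟨a, ha, m, hm, rfl⟩
end

section
/- Let L be a finite-dimensional solvable Lie algebra over any field, and let M, K be two core-free maximal subalgebras of L. Then K = (id + ad a)(M) for some a ∈ A, where A is the unique minimal ideal of L; in particular M and K are conjugate under an inner automorphism of L. -/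
/-!
`A` is abelian and `L = A ⊕ M = A ⊕ K`, so the projection `δ` onto `A` along `K`, restricted to
`M`, is a derivation from `M` into the `M`-module `A` with `m - δ m ∈ K`; once `δ = [·, a]` is
inner, `K = (1 + ad a) M`. Core-freeness makes `A` a faithful irreducible `M`-module, so it remains
to see that such modules of a solvable `M` have `H¹(M, A) = 0`.

Every `z` in a nonzero abelian ideal `N` of `M` satisfies `[[M, z], z] = 0`, which makes the
generalized null space of `z` a submodule; so `z` acts either nilpotently or invertibly. Not all of
`N` acts nilpotently: by Engel's theorem the `N`-invariants would be a nonzero submodule, hence all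
of `A`, against faithfulness. For an invertibly acting `z`, subtract an inner derivation to get
`δ z = 0`; the Leibniz rule then forces `δ = 0` first on `[M, z]` and then on `M`.
-/

open LieAlgebra LieModule Function

lemma pow_succ_mul_eq_of_commute {R : Type*} [Ring R] {s t : R}
    (h : Commute t (s * t - t * s)) (n : ℕ) :
    t ^ (n + 1) * s = s * t ^ (n + 1) - (n + 1) • ((s * t - t * s) * t ^ n) := by
  set r := s * t - t * s
  have hts : t * s = s * t - r := by simp [r]
  induction n with
  | zero => simp [hts]
  | succ n ih =>
    calc t ^ (n + 1 + 1) * s = t * (t ^ (n + 1) * s) := by rw [← mul_assoc, ← pow_succ']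
      _ = t * s * t ^ (n + 1) - (n + 1) • (t * r * t ^ n) := by
        rw [ih, mul_sub, mul_smul_comm]; simp only [mul_assoc]
      _ = s * t ^ (n + 1 + 1) - (n + 1 + 1) • (r * t ^ (n + 1)) := by
        rw [hts, h.eq, sub_mul, mul_assoc, mul_assoc r, ← pow_succ', ← pow_succ',
          succ_nsmul (r * t ^ (n + 1)) (n + 1)]
        abel

lemma Module.End.mapsTo_maxGenEigenspace_zero_of_commute {R V : Type*} [CommRing R]
    [AddCommGroup V] [Module R V] {s t : Module.End R V} (h : Commute t (s * t - t * s)) :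
    Set.MapsTo s (t.maxGenEigenspace 0) (t.maxGenEigenspace 0) := by
  intro v hv
  simp only [SetLike.mem_coe, Module.End.mem_maxGenEigenspace, zero_smul, sub_zero] at hv ⊢
  obtain ⟨k, hk⟩ := hv
  have hvanish : ∀ j, (t ^ (j + k)) v = 0 := fun j ↦ by
    rw [pow_add, Module.End.mul_apply, hk, map_zero]
  refine ⟨k + k + 1, ?_⟩
  rw [← Module.End.mul_apply, pow_succ_mul_eq_of_commute h]
  simp [add_right_comm k k 1, hvanish]

section Representation

variable {R L V : Type*} [CommRing R] [LieRing L] [LieAlgebra R L]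
  [AddCommGroup V] [Module R V] [LieRingModule L V] [LieModule R L V]

lemma LieModule.toEnd_lie_eq_sub (x y : L) :
    toEnd R L V ⁅x, y⁆ = toEnd R L V x * toEnd R L V y - toEnd R L V y * toEnd R L V x := by
  ext v; simp

lemma LieModule.commute_toEnd_of_lie_lie_eq_zero {x z : L} (h : ⁅⁅x, z⁆, z⁆ = 0) :
    Commute (toEnd R L V z) (toEnd R L V x * toEnd R L V z - toEnd R L V z * toEnd R L V x) := by
  rw [← toEnd_lie_eq_sub, Commute, SemiconjBy, ← sub_eq_zero, ← toEnd_lie_eq_sub, ← lie_skew, h,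
    neg_zero, map_zero]

lemma LieDerivation.eq_zero_of_apply_eq_zero (D : LieDerivation R L V) {z : L}
    (hz : ∀ x : L, ⁅⁅x, z⁆, z⁆ = 0) (hinj : Injective (toEnd R L V z)) (hDz : D z = 0) :
    D = 0 := by
  have hker : ∀ y, D ⁅y, z⁆ = 0 → D y = 0 := fun y hy ↦ by
    rw [apply_lie_eq_sub, hDz, lie_zero, zero_sub, neg_eq_zero] at hy
    exact hinj (by simpa using hy)
  ext x
  exact hker x (hker _ (by rw [hz, map_zero]))

lemma LieDerivation.exists_eq_inner_of_bijective (D : LieDerivation R L V) {z : L}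
    (hz : ∀ x : L, ⁅⁅x, z⁆, z⁆ = 0) (hbij : Bijective (toEnd R L V z)) :
    ∃ v, D = inner R L V v := by
  obtain ⟨v, hv⟩ := hbij.2 (D z)
  refine ⟨v, sub_eq_zero.mp ((D - inner R L V v).eq_zero_of_apply_eq_zero hz hbij.1 ?_)⟩
  simpa [sub_eq_zero] using hv.symm

variable (R V) in
def LieModule.maxGenEigenspaceZero (z : L) (hz : ∀ x : L, ⁅⁅x, z⁆, z⁆ = 0) :
    LieSubmodule R L V where
  toSubmodule := (toEnd R L V z).maxGenEigenspace 0
  lie_mem {x} _ hv :=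
    Module.End.mapsTo_maxGenEigenspace_zero_of_commute (commute_toEnd_of_lie_lie_eq_zero (hz x)) hv

@[simp]
lemma LieModule.mem_maxGenEigenspaceZero {z : L} {hz : ∀ x : L, ⁅⁅x, z⁆, z⁆ = 0} {v : V} :
    v ∈ maxGenEigenspaceZero R V z hz ↔ ∃ k : ℕ, (toEnd R L V z ^ k) v = 0 := by
  simp [maxGenEigenspaceZero, ← LieSubmodule.mem_toSubmodule]

variable (V) in
def LieIdeal.maxTrivSubmodule (I : LieIdeal R L) : LieSubmodule R L V where
  carrier := {v | ∀ y ∈ I, ⁅y, v⁆ = 0}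
  add_mem' hv hw y hy := by rw [lie_add, hv y hy, hw y hy, add_zero]
  zero_mem' y _ := lie_zero y
  smul_mem' t v hv y hy := by rw [lie_smul, hv y hy, smul_zero]
  lie_mem {x v} hv y hy := by
    rw [leibniz_lie, hv y hy, lie_zero, add_zero, hv _ (lie_mem_left R L I y x hy)]

end Representation

section Irreducible

variable {K L V : Type*} [Field K] [LieRing L] [LieAlgebra K L]
  [AddCommGroup V] [Module K V] [LieRingModule L V] [LieModule K L V] [FiniteDimensional K V]
  [IsIrreducible K L V]

lemma LieModule.isNilpotent_or_bijective_toEnd {z : L} (hz : ∀ x : L, ⁅⁅x, z⁆, z⁆ = 0) :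
    _root_.IsNilpotent (toEnd K L V z) ∨ Bijective (toEnd K L V z) := by
  rcases IsSimpleOrder.eq_bot_or_eq_top (maxGenEigenspaceZero K V z hz) with h | h
  · have hinj : Injective (toEnd K L V z) := by
      rw [← LinearMap.ker_eq_bot, eq_bot_iff]
      intro v hv
      rw [Submodule.mem_bot, ← LieSubmodule.mem_bot (R := K) (L := L), ← h,
        mem_maxGenEigenspaceZero]
      exact ⟨1, by simpa using hv⟩
    exact Or.inr ⟨hinj, LinearMap.injective_iff_surjective.mp hinj⟩
  · refine Or.inl <| (LinearMap.charpoly_nilpotent_tfae (toEnd K L V z)).out 0 2 |>.mpr fun v ↦ ?_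
    have hv : v ∈ maxGenEigenspaceZero K V z hz := h ▸ LieSubmodule.mem_top v
    simpa using hv

lemma LieIdeal.le_ker_of_forall_isNilpotent (I : LieIdeal K L)
    (hnil : ∀ y ∈ I, _root_.IsNilpotent (toEnd K L V y)) : I ≤ LieModule.ker K L V := by
  let J : LieSubalgebra K L := I
  have : LieModule.IsNilpotent J V := (isNilpotent_iff_forall' (R := K)).mpr fun y ↦ by
    rw [LieSubalgebra.toEnd_eq]; exact hnil y y.2
  have : Nontrivial V := nontrivial_of_isIrreducible K L V
  have := nontrivial_max_triv_of_isNilpotent K J V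
  obtain ⟨⟨v, hv⟩, hv0⟩ := exists_ne (0 : LieModule.maxTrivSubmodule K J V)
  have hW : LieIdeal.maxTrivSubmodule V I = ⊤ := by
    refine (IsSimpleOrder.eq_bot_or_eq_top _).resolve_left fun hbot ↦ hv0 ?_
    have hvI : v ∈ LieIdeal.maxTrivSubmodule V I := fun y hy ↦ hv ⟨y, hy⟩
    rw [hbot, LieSubmodule.mem_bot] at hvI
    exact Subtype.ext hvI
  intro y hy
  refine (LieModule.mem_ker _ _ _ y).mpr fun w ↦ ?_
  have hw : w ∈ LieIdeal.maxTrivSubmodule V I := hW ▸ LieSubmodule.mem_top w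
  exact hw y hy

lemma LieModule.exists_forall_lie_lie_eq_zero_and_bijective [IsSolvable L] [Nontrivial L]
    [IsFaithful K L V] : ∃ z : L, (∀ x : L, ⁅⁅x, z⁆, z⁆ = 0) ∧ Bijective (toEnd K L V z) := by
  set I := derivedAbelianOfIdeal (⊤ : LieIdeal K L)
  have hI : I ≠ ⊥ := by
    rw [Ne, abelian_of_solvable_ideal_eq_bot_iff]
    exact top_ne_bot
  have hII : ⁅I, I⁆ = ⊥ :=
    (LieSubmodule.lie_abelian_iff_lie_self_eq_bot I).mp (abelian_derivedAbelianOfIdeal _)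
  have hz : ∀ z ∈ I, ∀ x : L, ⁅⁅x, z⁆, z⁆ = 0 := fun z hz x ↦ by
    have h := LieSubmodule.lie_mem_lie (lie_mem_right K L I x z hz) hz
    rwa [hII, LieSubmodule.mem_bot] at h
  by_contra! hnone
  have hnil : ∀ z ∈ I, _root_.IsNilpotent (toEnd K L V z) := fun z hzI ↦
    (isNilpotent_or_bijective_toEnd (hz z hzI)).resolve_right (hnone z (hz z hzI))
  exact hI (le_bot_iff.mp ((I.le_ker_of_forall_isNilpotent hnil).trans (ker_eq_bot K L V).le))

lemma LieDerivation.exists_eq_inner_of_isIrreducible [IsSolvable L] [IsFaithful K L V]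
    (D : LieDerivation K L V) : ∃ v, D = inner K L V v := by
  rcases subsingleton_or_nontrivial L with hL | hL
  · exact ⟨0, ext fun x ↦ by simp [Subsingleton.elim x 0]⟩
  · obtain ⟨z, hz, hbij⟩ := exists_forall_lie_lie_eq_zero_and_bijective (K := K) (L := L) (V := V)
    exact D.exists_eq_inner_of_bijective hz hbij

end Irreducible

lemma Submodule.map_eq_of_forall_sub_mem {R E : Type*} [CommRing R] [AddCommGroup E] [Module R E]
    {p q q' : Submodule R E} (hq : Codisjoint p q) (hq' : Disjoint p q') {f : E →ₗ[R] E}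
    (hf : ∀ x, f x - x ∈ p) (hmap : ∀ x ∈ q, f x ∈ q') : q.map f = q' := by
  refine le_antisymm (map_le_iff_le_comap.mpr hmap) fun y hy ↦ ?_
  obtain ⟨a, ha, x, hx, rfl⟩ := mem_sup.mp (hq.eq_top ▸ mem_top : y ∈ p ⊔ q)
  have hdiff : a + x - f x ∈ p := by
    rw [show a + x - f x = a - (f x - x) by abel]
    exact sub_mem ha (hf x)
  have h0 := (disjoint_def.mp hq') _ hdiff (sub_mem hy (hmap x hx))
  exact ⟨x, hx, (sub_eq_zero.mp h0).symm⟩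

lemma Submodule.lie_mem_of_codisjoint {R L V : Type*} [CommRing R] [LieRing L] [AddCommGroup V]
    [Module R L] [Module R V] [LieRingModule L V] {P Q : Submodule R L} (hPQ : Codisjoint P Q)
    {W : Submodule R V} (hP : ∀ x ∈ P, ∀ v ∈ W, ⁅x, v⁆ ∈ W) (hQ : ∀ x ∈ Q, ∀ v ∈ W, ⁅x, v⁆ ∈ W)
    (x : L) {v : V} (hv : v ∈ W) : ⁅x, v⁆ ∈ W := by
  obtain ⟨p, hp, q, hq, rfl⟩ := mem_sup.mp (hPQ.eq_top ▸ mem_top : x ∈ P ⊔ Q)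
  rw [add_lie]
  exact add_mem (hP p hp v hv) (hQ q hq v hv)

section Complement

variable {R L V : Type*} [CommRing R] [LieRing L] [LieAlgebra R L]
  [AddCommGroup V] [Module R V] [LieRingModule L V] [LieModule R L V]

def LieSubalgebra.IsCoreFree (S : LieSubalgebra R L) : Prop :=
  ∀ I : LieIdeal R L, (I : Set L) ⊆ S → I = ⊥

lemma LieIdeal.isLieAbelian_of_isAtom [IsSolvable L] {A : LieIdeal R L} (hA : IsAtom A) :
    IsLieAbelian A := by
  by_contra h
  have hAA : ⁅A, A⁆ = A := lie_eq_self_of_isAtom_of_nonabelian A hA h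
  have hconst : ∀ k, derivedSeriesOfIdeal R L k A = A := fun k ↦ by
    induction k with
    | zero => rfl
    | succ k ih => rw [derivedSeriesOfIdeal_succ, ih, hAA]
  obtain ⟨k, hk⟩ := IsSolvable.solvable R A
  rw [derivedSeries_def, LieIdeal.derivedSeries_eq_bot_iff, hconst] at hk
  exact hA.1 hk

lemma LieIdeal.lie_eq_zero_of_mem_of_mem {A : LieIdeal R L} [IsLieAbelian A] {x y : L}
    (hx : x ∈ A) (hy : y ∈ A) : ⁅x, y⁆ = 0 :=
  congrArg Subtype.val (trivial_lie_zero A A ⟨x, hx⟩ ⟨y, hy⟩)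

lemma LieIdeal.codisjoint_of_isCoatom {A : LieIdeal R L} {S : LieSubalgebra R L}
    (hS : IsCoatom S) (hAS : ¬(A : Set L) ⊆ S) : Codisjoint A.toSubmodule S.toSubmodule := by
  let T : LieSubalgebra R L :=
    { toSubmodule := A.toSubmodule ⊔ S.toSubmodule
      lie_mem' := fun {x y} hx hy ↦ by
        obtain ⟨a, ha, s, hs, rfl⟩ := Submodule.mem_sup.mp hx
        obtain ⟨a', ha', s', hs', rfl⟩ := Submodule.mem_sup.mp hy
        rw [add_lie, lie_add s, ← add_assoc]
        exact add_mem (Submodule.mem_sup_left (add_mem (lie_mem_left R L A a _ ha)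
          (lie_mem_right R L A s a' ha'))) (Submodule.mem_sup_right (S.lie_mem hs hs')) }
  have hST : S < T := lt_of_le_of_ne (fun x hx ↦ Submodule.mem_sup_right hx) fun h ↦
    hAS fun x hx ↦ by rw [SetLike.mem_coe, h]; exact Submodule.mem_sup_left hx
  exact codisjoint_iff.mpr (congrArg LieSubalgebra.toSubmodule (hS.2 T hST))

lemma LieSubalgebra.IsCoreFree.disjoint {A : LieIdeal R L} [IsLieAbelian A]
    {S : LieSubalgebra R L} (hS : S.IsCoreFree) (hAS : Codisjoint A.toSubmodule S.toSubmodule) :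
    Disjoint A.toSubmodule S.toSubmodule := by
  let I : LieIdeal R L :=
    { toSubmodule := A.toSubmodule ⊓ S.toSubmodule
      lie_mem := fun {x w} hw ↦ Submodule.lie_mem_of_codisjoint hAS
        (W := A.toSubmodule ⊓ S.toSubmodule)
        (fun a ha w hw ↦ by
          rw [LieIdeal.lie_eq_zero_of_mem_of_mem ha (Submodule.mem_inf.mp hw).1]; exact zero_mem _)
        (fun s hs w hw ↦ Submodule.mem_inf.mpr
          ⟨lie_mem_right R L A s w (Submodule.mem_inf.mp hw).1,
            S.lie_mem hs (Submodule.mem_inf.mp hw).2⟩) x hw }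
  exact disjoint_iff.mpr (congrArg LieSubmodule.toSubmodule (hS I fun x hx ↦ hx.2))

lemma LieSubalgebra.IsCoreFree.isCompl {A : LieIdeal R L} (hA : IsAtom A) [IsLieAbelian A]
    {S : LieSubalgebra R L} (hS : IsCoatom S) (hcf : S.IsCoreFree) :
    IsCompl A.toSubmodule S.toSubmodule :=
  have hcod := LieIdeal.codisjoint_of_isCoatom hS fun h ↦ hA.1 (hcf A h)
  ⟨hcf.disjoint hcod, hcod⟩

lemma LieSubalgebra.IsCoreFree.ker_eq {A : LieIdeal R L} [IsLieAbelian A] {S : LieSubalgebra R L}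
    (hcf : S.IsCoreFree) (hAS : IsCompl A.toSubmodule S.toSubmodule) :
    LieModule.ker R L A = A := by
  set C := LieModule.ker R L A
  have hAC : A ≤ C := (LieIdeal.isLieAbelian_iff R L).mp inferInstance
  let I : LieIdeal R L :=
    { toSubmodule := C.toSubmodule ⊓ S.toSubmodule
      lie_mem := fun {x w} hw ↦ Submodule.lie_mem_of_codisjoint hAS.codisjoint
        (W := C.toSubmodule ⊓ S.toSubmodule)
        (fun a ha w hw ↦ by
          have hwa : ⁅w, a⁆ = 0 := congrArg Subtype.val
            ((LieModule.mem_ker _ _ _ w).mp (Submodule.mem_inf.mp hw).1 ⟨a, ha⟩)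
          rw [← lie_skew, hwa, neg_zero]; exact zero_mem _)
        (fun s hs w hw ↦ Submodule.mem_inf.mpr
          ⟨lie_mem_right R L C s w (Submodule.mem_inf.mp hw).1,
            S.lie_mem hs (Submodule.mem_inf.mp hw).2⟩) x hw }
  have hI : I = ⊥ := hcf I fun x hx ↦ hx.2
  refine le_antisymm (fun x hx ↦ ?_) hAC
  obtain ⟨a, ha, s, hs, rfl⟩ :=
    Submodule.mem_sup.mp (hAS.codisjoint.eq_top ▸ Submodule.mem_top : x ∈ A.toSubmodule ⊔ _)
  have hsI : s ∈ I := ⟨by simpa using sub_mem hx (hAC ha), hs⟩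
  rw [hI, LieSubmodule.mem_bot] at hsI
  simpa [hsI] using ha

lemma LieIdeal.isFaithful_of_ker_eq {A : LieIdeal R L} {S : LieSubalgebra R L}
    (hker : LieModule.ker R L A = A) (hAS : Disjoint A.toSubmodule S.toSubmodule) :
    IsFaithful R S A := by
  rw [isFaithful_iff_ker_eq_bot, eq_bot_iff]
  intro x hx
  have hxA : (x : L) ∈ LieModule.ker R L A := (LieModule.mem_ker _ _ _ _).mpr fun m ↦
    (LieModule.mem_ker _ _ _ x).mp hx m
  rw [hker] at hxA
  rw [LieSubmodule.mem_bot, ← Subtype.val_inj]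
  exact (Submodule.disjoint_def.mp hAS) _ hxA x.2

lemma LieIdeal.eq_of_isAtom_of_ker_eq {A A' : LieIdeal R L} (hA : IsAtom A)
    (hker : LieModule.ker R L A = A) (hA' : IsAtom A') : A' = A := by
  by_contra hne
  have hinf : A' ⊓ A = ⊥ := disjoint_iff.mp (hA'.disjoint_of_ne hA hne)
  have hle : A' ≤ A := hker ▸ fun x hx ↦ (LieModule.mem_ker _ _ _ x).mpr fun m ↦ by
    have h := LieSubmodule.lie_le_inf A' A (LieSubmodule.lie_mem_lie hx m.2)
    rw [hinf, LieSubmodule.mem_bot] at h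
    exact Subtype.ext h
  exact hne ((hA.le_iff.mp hle).resolve_left hA'.1)

lemma LieIdeal.isIrreducible_of_isAtom {A : LieIdeal R L} (hA : IsAtom A) :
    IsIrreducible R L A := by
  have : Nontrivial A := (LieSubmodule.nontrivial_iff_ne_bot R L L).mpr hA.1
  refine IsIrreducible.mk fun W hW ↦ ?_
  have hmap : W.map (LieSubmodule.incl A) ≠ ⊥ := fun h ↦ hW (LieSubmodule.map_injective_of_injective
    Subtype.val_injective (h.trans LieSubmodule.map_bot.symm))
  rw [← not_lt_top_iff, ← LieSubmodule.map_incl_lt_iff_lt_top, hA.lt_iff]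
  exact hmap

lemma LieModule.isIrreducible_of_codisjoint {I : LieIdeal R L} {S : LieSubalgebra R L}
    (hI : I ≤ LieModule.ker R L V) (h : Codisjoint I.toSubmodule S.toSubmodule)
    [IsIrreducible R L V] : IsIrreducible R S V := by
  have : Nontrivial V := nontrivial_of_isIrreducible R L V
  refine IsIrreducible.mk fun W hW ↦ ?_
  let W' : LieSubmodule R L V :=
    { W.toSubmodule with
      lie_mem := fun {x v} hv ↦ Submodule.lie_mem_of_codisjoint h
        (fun a ha v _ ↦ by rw [(LieModule.mem_ker _ _ _ a).mp (hI ha) v]; exact zero_mem _)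
        (fun s hs v hv ↦ W.lie_mem (x := ⟨s, hs⟩) hv) x hv }
  have hW' : W' ≠ ⊥ := by
    rwa [Ne, ← LieSubmodule.toSubmodule_eq_bot] at hW ⊢
  rw [← LieSubmodule.toSubmodule_eq_top]
  exact (LieSubmodule.toSubmodule_eq_top W').mpr
    ((IsSimpleOrder.eq_bot_or_eq_top W').resolve_left hW')

end Complement

section Projection

variable {R L : Type*} [CommRing R] [LieRing L] [LieAlgebra R L] {A : LieIdeal R L}
  [IsLieAbelian A] {K : LieSubalgebra R L} (hK : IsCompl A.toSubmodule K.toSubmodule)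

lemma LieIdeal.projection_lie (x y : L) :
    A.toSubmodule.projection K.toSubmodule hK ⁅x, y⁆ =
      ⁅x, A.toSubmodule.projection K.toSubmodule hK y⁆ -
        ⁅y, A.toSubmodule.projection K.toSubmodule hK x⁆ := by
  set P := A.toSubmodule.projection K.toSubmodule hK
  have hP : ∀ z, P z ∈ A := Submodule.projection_apply_mem hK
  have hsplit : ⁅x, y⁆ = (⁅x, P y⁆ - ⁅y, P x⁆) + ⁅x - P x, y - P y⁆ := by
    rw [sub_lie, lie_sub, lie_sub, lie_eq_zero_of_mem_of_mem (hP x) (hP y), ← lie_skew (P x) y]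
    abel
  rw [hsplit, map_add, Submodule.projection_apply_of_mem_left hK
    (sub_mem (lie_mem_right R L A _ _ (hP y)) (lie_mem_right R L A _ _ (hP x))),
    Submodule.projection_apply_of_mem_right hK
      (K.lie_mem (Submodule.sub_projection_mem hK x) (Submodule.sub_projection_mem hK y)),
    add_zero]

noncomputable def LieIdeal.projectionDerivation (M : LieSubalgebra R L) : LieDerivation R M A where
  toLinearMap := A.toSubmodule.projectionOnto K.toSubmodule hK ∘ₗ M.toSubmodule.subtype
  leibniz' x y := Subtype.ext (projection_lie hK x y)

lemma LieIdeal.map_eq_of_projectionDerivation_eq_inner {M : LieSubalgebra R L}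
    (hM : Codisjoint A.toSubmodule M.toSubmodule) (v : A)
    (hv : projectionDerivation hK M = LieDerivation.inner R M A v) :
    M.toSubmodule.map (1 + ad R L v) = K.toSubmodule := by
  refine Submodule.map_eq_of_forall_sub_mem hM hK.disjoint (fun x ↦ ?_) fun m hm ↦ ?_
  · simpa using lie_mem_left R L A v x v.2
  · have hPm : A.toSubmodule.projection K.toSubmodule hK m = ⁅m, (v : L)⁆ :=
      congrArg Subtype.val (LieDerivation.congr_fun hv ⟨m, hm⟩)
    rw [← Submodule.projection_apply_eq_zero_iff hK]
    rw [LinearMap.add_apply, Module.End.one_apply, ad_apply, map_add, hPm,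
      Submodule.projection_apply_of_mem_left hK (lie_mem_left R L A v m v.2), ← lie_skew,
      neg_add_cancel]

end Projection

/-- Two core-free maximal subalgebras `M`, `K` of a finite-dimensional solvable Lie algebra
are conjugate under `id + ad a` for some `a` in the unique minimal ideal `A` of `L`. -/
theorem coreFree_maximal_subalgebras_conjugate (F : Type*) [Field F]
    (L : Type*) [LieRing L] [LieAlgebra F L] [FiniteDimensional F L]
    [LieAlgebra.IsSolvable L]
    (M K : LieSubalgebra F L) (hM : IsCoatom M) (hK : IsCoatom K)
    (hMcf : ∀ I : LieIdeal F L, (I : Set L) ⊆ (M : Set L) → I = ⊥)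
    (hKcf : ∀ I : LieIdeal F L, (I : Set L) ⊆ (K : Set L) → I = ⊥) :
    ∃ A : LieIdeal F L, IsAtom A ∧ (∀ A' : LieIdeal F L, IsAtom A' → A' = A) ∧
      ∃ a ∈ A, (K : Set L) =
        ⇑((1 : Module.End F L) + LieAlgebra.ad F L a) '' (M : Set L) := by
  have : Nontrivial L := by
    refine (subsingleton_or_nontrivial L).resolve_left fun _ ↦ hM.1 ?_
    exact eq_top_iff.mpr fun x _ ↦ Subsingleton.elim x 0 ▸ M.zero_mem
  obtain ⟨A, hA⟩ := IsAtomic.exists_atom (LieIdeal F L)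
  have : IsLieAbelian A := LieIdeal.isLieAbelian_of_isAtom hA
  have hAM : IsCompl A.toSubmodule M.toSubmodule := LieSubalgebra.IsCoreFree.isCompl hA hM hMcf
  have hAK : IsCompl A.toSubmodule K.toSubmodule := LieSubalgebra.IsCoreFree.isCompl hA hK hKcf
  have hker : LieModule.ker F L A = A := LieSubalgebra.IsCoreFree.ker_eq hMcf hAM
  have : IsFaithful F M A := LieIdeal.isFaithful_of_ker_eq hker hAM.disjoint
  have : IsIrreducible F L A := LieIdeal.isIrreducible_of_isAtom hA
  have : IsIrreducible F M A := LieModule.isIrreducible_of_codisjoint hker.ge hAM.codisjoint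
  have : IsSolvable M := Injective.lieAlgebra_isSolvable (f := M.incl) Subtype.val_injective
  obtain ⟨v, hv⟩ := (LieIdeal.projectionDerivation hAK M).exists_eq_inner_of_isIrreducible
  refine ⟨A, hA, fun A' hA' ↦ LieIdeal.eq_of_isAtom_of_ker_eq hA hker hA', v, v.2, ?_⟩
  have hmap := LieIdeal.map_eq_of_projectionDerivation_eq_inner hAK hAM.codisjoint v hv
  rw [← LieSubalgebra.coe_toSubmodule, ← hmap, Submodule.map_coe]
  rfl
end

section
/- Let L be a finite-dimensional solvable Lie algebra with a core-free maximal subalgebra M. Then L has a unique minimal ideal A, A is abelian, C_L(A) = A, and L = A ⊕ M (internal direct sum of vector spaces, with M a subalgebra and A an ideal). -/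
/-!
A minimal ideal `A` of a solvable Lie algebra is abelian, since otherwise `⁅A, A⁆ = A` and `A`
would survive in every term of the derived series. Core-freeness gives `A ⊄ M`, so maximality of
`M` forces `A + M = L`. Then `C_L(A) ∩ M` is an ideal (brackets with `A` vanish on it and `M`
normalises both factors), hence zero; as `A ⊆ C_L(A)`, the modular law gives `C_L(A) = A` and
`A ∩ M = 0`. Any other minimal ideal meets `A` trivially, so it centralises `A` and lies in `A`.
-/

open LieAlgebra

namespace LieSubalgebra

variable {R L : Type*} [CommRing R] [LieRing L] [LieAlgebra R L]

def IsCoreFree_s5 (M : LieSubalgebra R L) : Prop :=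
  ∀ I : LieIdeal R L, (I : Set L) ⊆ M → I = ⊥

theorem IsCoreFree_s5.eq_bot_of_le {M : LieSubalgebra R L} (hM : M.IsCoreFree_s5)
    {N : Submodule R L} (hNM : N ≤ M.toSubmodule) (hN : ∀ x y : L, y ∈ N → ⁅x, y⁆ ∈ N) :
    N = ⊥ :=
  congrArg LieSubmodule.toSubmodule (hM { N with lie_mem := hN _ _ } hNM)

theorem nontrivial_of_isCoatom {M : LieSubalgebra R L} (hM : IsCoatom M) : Nontrivial L := by
  by_contra h
  have : Subsingleton L := not_nontrivial_iff_subsingleton.mp h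
  exact hM.1 (eq_top_iff.mpr fun x _ => Subsingleton.elim x 0 ▸ M.zero_mem)

def supLieIdeal (M : LieSubalgebra R L) (A : LieIdeal R L) : LieSubalgebra R L where
  toSubmodule := A.toSubmodule ⊔ M.toSubmodule
  lie_mem' {x y} hx hy := by
    obtain ⟨a, ha, m, hm, rfl⟩ := Submodule.mem_sup.mp hx
    obtain ⟨a', ha', m', hm', rfl⟩ := Submodule.mem_sup.mp hy
    rw [lie_add, add_lie a m m', ← add_assoc]
    exact Submodule.add_mem_sup
      (add_mem (A.lie_mem ha') (lie_mem_left R L A _ _ ha)) (M.lie_mem hm hm')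

theorem sup_eq_top_of_isCoatom {M : LieSubalgebra R L} (hM : IsCoatom M) {A : LieIdeal R L}
    (hAM : ¬(A : Set L) ⊆ M) : A.toSubmodule ⊔ M.toSubmodule = ⊤ := by
  obtain ⟨z, hzA, hzM⟩ := Set.not_subset.mp hAM
  have hlt : M < M.supLieIdeal A :=
    SetLike.lt_iff_le_and_exists.mpr
      ⟨fun _ hm => Submodule.mem_sup_right hm, z, Submodule.mem_sup_left hzA, hzM⟩
  exact congrArg toSubmodule (hM.2 _ hlt)

end LieSubalgebra

namespace LieIdeal

variable {R L : Type*} [CommRing R] [LieRing L] [LieAlgebra R L]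

-- The kernel of the adjoint action of `L` on `I` is the centraliser `C_L(I)`.
theorem mem_ker_iff {I : LieIdeal R L} {x : L} :
    x ∈ LieModule.ker R L I ↔ ∀ a ∈ I, ⁅x, a⁆ = 0 := by
  simp only [LieModule.mem_ker, Subtype.forall, ← ZeroMemClass.coe_eq_zero,
    LieSubmodule.coe_bracket]

theorem le_ker_iff {I J : LieIdeal R L} : I ≤ LieModule.ker R L J ↔ ⁅I, J⁆ = ⊥ := by
  rw [LieSubmodule.lie_eq_bot_iff]
  exact forall₂_congr fun x _ => mem_ker_iff

theorem eq_bot_of_lie_self_eq_self [IsSolvable L] {I : LieIdeal R L} (h : ⁅I, I⁆ = I) :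
    I = ⊥ := by
  obtain ⟨k, hk⟩ := IsSolvable.solvable (R := R) (L := L)
  have hle : ∀ n, I ≤ derivedSeries R L n := by
    intro n
    induction n with
    | zero => exact le_top
    | succ n ih =>
      calc I = ⁅I, I⁆ := h.symm
        _ ≤ ⁅derivedSeries R L n, derivedSeries R L n⁆ := LieSubmodule.mono_lie ih ih
        _ = derivedSeries R L (n + 1) := (derivedSeriesOfIdeal_succ R L ⊤ n).symm
  exact le_bot_iff.mp (hk ▸ hle k)

theorem lie_self_eq_bot_of_isAtom_s5 [IsSolvable L] {I : LieIdeal R L} (hI : IsAtom I) :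
    ⁅I, I⁆ = ⊥ := by
  rw [← LieSubmodule.lie_abelian_iff_lie_self_eq_bot]
  by_contra h
  exact hI.1 (eq_bot_of_lie_self_eq_self (lie_eq_self_of_isAtom_of_nonabelian I hI h))

theorem le_ker_of_isAtom_of_ne {I J : LieIdeal R L} (hI : IsAtom I) (hJ : IsAtom J)
    (h : I ≠ J) : I ≤ LieModule.ker R L J :=
  le_ker_iff.mpr (le_bot_iff.mp ((hI.disjoint_of_ne hJ h).eq_bot ▸ LieSubmodule.lie_le_inf I J))

end LieIdeal

namespace LieSubalgebra.IsCoreFree_s5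

variable {R L : Type*} [CommRing R] [LieRing L] [LieAlgebra R L]
  {M : LieSubalgebra R L} {A : LieIdeal R L}

theorem disjoint_ker (hM : M.IsCoreFree_s5) (hAM : A.toSubmodule ⊔ M.toSubmodule = ⊤) :
    Disjoint (LieModule.ker R L A).toSubmodule M.toSubmodule := by
  rw [disjoint_iff]
  refine hM.eq_bot_of_le inf_le_right fun x y hy => ?_
  obtain ⟨a, ha, m, hm, rfl⟩ := Submodule.mem_sup.mp (hAM ▸ Submodule.mem_top : x ∈ _)
  have hay : ⁅a, y⁆ = 0 := by rw [← lie_skew, LieIdeal.mem_ker_iff.mp hy.1 a ha, neg_zero]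
  rw [add_lie, hay, zero_add]
  exact ⟨(LieModule.ker R L A).lie_mem hy.1, M.lie_mem hm hy.2⟩

theorem ker_eq_self (hM : M.IsCoreFree_s5) (hA : ⁅A, A⁆ = ⊥)
    (hAM : A.toSubmodule ⊔ M.toSubmodule = ⊤) : LieModule.ker R L A = A := by
  have hle : A.toSubmodule ≤ (LieModule.ker R L A).toSubmodule := LieIdeal.le_ker_iff.mpr hA
  refine (LieSubmodule.toSubmodule_inj _ _).mp
    (eq_of_le_of_inf_le_of_sup_le (z := M.toSubmodule) hle ?_ ?_).symm
  · rw [(hM.disjoint_ker hAM).eq_bot]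
    exact bot_le
  · rw [hAM]
    exact le_top

end LieSubalgebra.IsCoreFree_s5

/-- If a finite-dimensional solvable Lie algebra `L` has a core-free maximal subalgebra `M`,
then `L` has a unique minimal ideal `A`, which is abelian and self-centralising, and
`L = A ⊕ M`. -/
theorem coreFree_maximal_subalgebra_structure (F : Type*) [Field F]
    (L : Type*) [LieRing L] [LieAlgebra F L] [FiniteDimensional F L]
    [LieAlgebra.IsSolvable L]
    (M : LieSubalgebra F L) (hM : IsCoatom M)
    (hMcf : ∀ I : LieIdeal F L, (I : Set L) ⊆ (M : Set L) → I = ⊥) :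
    ∃ A : LieIdeal F L, IsAtom A ∧ (∀ A' : LieIdeal F L, IsAtom A' → A' = A) ∧
      (∀ a ∈ A, ∀ b ∈ A, ⁅a, b⁆ = 0) ∧
      (∀ x : L, (∀ a ∈ A, ⁅x, a⁆ = 0) ↔ x ∈ A) ∧
      (∀ x : L, ∃ a ∈ A, ∃ m ∈ M, x = a + m) ∧
      (∀ x : L, x ∈ A → x ∈ M → x = 0) := by
  have : Nontrivial L := LieSubalgebra.nontrivial_of_isCoatom hM
  have : Nontrivial (LieIdeal F L) := (LieSubmodule.nontrivial_iff F L L).mpr this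
  obtain ⟨A, hA⟩ := IsAtomic.exists_atom (LieIdeal F L)
  have hAA : ⁅A, A⁆ = ⊥ := LieIdeal.lie_self_eq_bot_of_isAtom_s5 hA
  have hsup : A.toSubmodule ⊔ M.toSubmodule = ⊤ :=
    LieSubalgebra.sup_eq_top_of_isCoatom hM fun h => hA.1 (hMcf A h)
  have hker : LieModule.ker F L A = A := LieSubalgebra.IsCoreFree_s5.ker_eq_self hMcf hAA hsup
  have hdisj := LieSubalgebra.IsCoreFree_s5.disjoint_ker hMcf hsup
  rw [hker] at hdisj
  refine ⟨A, hA, fun A' hA' => ?_, (LieSubmodule.lie_eq_bot_iff A A).mp hAA,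
    fun x => LieIdeal.mem_ker_iff.symm.trans (SetLike.ext_iff.mp hker x), fun x => ?_,
    fun x hxA hxM => Submodule.disjoint_def.mp hdisj x hxA hxM⟩
  · by_contra hne
    exact hne ((hA.le_iff_eq hA'.1).mp (hker ▸ LieIdeal.le_ker_of_isAtom_of_ne hA' hA hne))
  · obtain ⟨a, ha, m, hm, hx⟩ := Submodule.mem_sup.mp (hsup ▸ Submodule.mem_top : x ∈ _)
    exact ⟨a, ha, m, hm, hx.symm⟩
end

section
/- Let L be a finite-dimensional solvable Lie algebra over a field of characteristic p > 0 such that the derived algebra L² is nilpotent of class less than p, and let M, K be maximal subalgebras of L. Then M and K are conjugate in L if and only if they have the same core: M_L = K_L. -/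
open LieAlgebra

/-- The (truncated) exponential of the adjoint of `x`, `Σ_{r<p} (1/r!)(ad x)^r`. -/
noncomputable def expAdP (F : Type*) [Field F] (L : Type*) [LieRing L] [LieAlgebra F L]
    (p : ℕ) (x : L) : Module.End F L :=
  ∑ r ∈ Finset.range p, ((r.factorial : F)⁻¹) • (LieAlgebra.ad F L x ^ r)

/-- The core of a subalgebra: the largest ideal of `L` contained in it. -/
noncomputable def lieCore (F : Type*) [Field F] (L : Type*) [LieRing L] [LieAlgebra F L]
    (M : LieSubalgebra F L) : LieIdeal F L :=
  sSup {I : LieIdeal F L | (I : Set L) ⊆ (M : Set L)}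

/-!
The truncated exponentials of elements of `L²` are invertible (as `ad x` is nilpotent) and map
every ideal into, hence onto, itself; so conjugate subalgebras contain the same ideals.

Conversely, let `C` be the common core of `M ≠ K` and `A/C` a minimal ideal of `L/C`. Since `L²`
acts nilpotently, `⁅L², A⁆ ≤ C`, hence `A/C` is abelian, `L = M + A = K + A` and
`M ∩ A = K ∩ A = C`; moreover `⁅M, M⁆ ≤ M ∩ (L² + C)`, an ideal inside `M`, so `⁅M, M⁆ ≤ C`.
As `M` is not an ideal, some `m₀ ∈ M` acts nontrivially, hence bijectively, on `A/C`. This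
turns the cocycle comparing `M` with `K` into a coboundary: `m + ⁅a, m⁆ ∈ K` for all `m ∈ M`,
for some `a ∈ A`, which may be taken in `L²`. Then `exp (ad a) ≡ 1 + ad a` modulo `C` on `M`,
so it maps `M` into `K`, and onto `K` because `dim M = dim K`.
-/

open Module

section LinearAlgebra
variable {K V W : Type*} [Field K] [AddCommGroup V] [Module K V] [AddCommGroup W] [Module K W]

lemma Submodule.map_eq_of_le_of_finrank_eq {f : V →ₗ[K] W} (hf : Function.Injective f)
    {S : Submodule K V} {T : Submodule K W} [FiniteDimensional K T] (h : S.map f ≤ T)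
    (hST : finrank K S = finrank K T) : S.map f = T :=
  Submodule.eq_of_le_of_finrank_eq h <|
    (LinearEquiv.finrank_eq (Submodule.equivMapOfInjective f hf S)).symm.trans hST

lemma Submodule.finrank_eq_of_sup_eq_of_inf_eq [FiniteDimensional K V] {S T A : Submodule K V}
    (hsup : S ⊔ A = T ⊔ A) (hinf : S ⊓ A = T ⊓ A) : finrank K S = finrank K T := by
  have hS := Submodule.finrank_sup_add_finrank_inf_eq S A
  have hT := Submodule.finrank_sup_add_finrank_inf_eq T A
  rw [hsup, hinf] at hS
  omega

end LinearAlgebra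

section
variable {F L : Type*} [Field F] [LieRing L] [LieAlgebra F L]

namespace LieIdeal

lemma lcs_succ_le_map_lcs (I : LieIdeal F L) (k : ℕ) :
    I.lcs L (k + 1) ≤ (I.lcs I k).map (LieSubmodule.incl I) := by
  induction k with
  | zero => simpa using LieSubmodule.lie_le_left I ⊤
  | succ k ih =>
    rw [lcs_succ I L (k + 1), lcs_succ I I k, LieSubmodule.map_bracket_eq]
    exact LieSubmodule.mono_lie_right I ih

lemma lcs_succ_eq_bot_of_lowerCentralSeries_eq_bot {I : LieIdeal F L} {k : ℕ}
    (h : LieModule.lowerCentralSeries F I I k = ⊥) : I.lcs L (k + 1) = ⊥ := by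
  rw [← LieSubmodule.toSubmodule_inj, ← coe_lcs_eq, LieSubmodule.bot_toSubmodule,
    ← LieSubmodule.bot_toSubmodule (L := L), LieSubmodule.toSubmodule_inj] at h
  simpa [h] using lcs_succ_le_map_lcs I k

variable {I : LieIdeal F L} {k : ℕ}

lemma ad_pow_apply_mem_lcs {x : L} (hx : x ∈ I) (k : ℕ) (y : L) :
    (ad F L x ^ k) y ∈ I.lcs L k := by
  induction k with
  | zero => simp
  | succ k ih =>
    rw [pow_succ', lcs_succ]
    exact LieSubmodule.lie_mem_lie hx ih

lemma ad_pow_eq_zero_of_lcs_eq_bot (hI : I.lcs L k = ⊥) {x : L} (hx : x ∈ I) :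
    ad F L x ^ k = 0 := by
  ext y
  simpa [hI] using ad_pow_apply_mem_lcs hx k y

lemma le_of_le_lie_sup (hI : I.lcs L k = ⊥) {J C : LieIdeal F L} (h : J ≤ ⁅I, J⁆ ⊔ C) :
    J ≤ C := by
  suffices ∀ n, J ≤ I.lcs L n ⊔ C by simpa [hI] using this k
  intro n
  induction n with
  | zero => simp
  | succ n ih =>
    calc J ≤ ⁅I, J⁆ ⊔ C := h
      _ ≤ ⁅I, I.lcs L n ⊔ C⁆ ⊔ C := sup_le_sup_right (LieSubmodule.mono_lie_right I ih) C
      _ ≤ I.lcs L (n + 1) ⊔ C := by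
        rw [LieSubmodule.lie_sup, lcs_succ, sup_assoc]
        exact sup_le_sup_left (sup_le (LieSubmodule.lie_le_right C I) le_rfl) _

end LieIdeal

section TruncatedExp
variable {p : ℕ}

lemma ad_pow_apply_mem (J : LieIdeal F L) (x : L) (r : ℕ) {z : L} (hz : z ∈ J) :
    (ad F L x ^ r) z ∈ J := by
  induction r with
  | zero => simpa
  | succ r ih => rw [pow_succ', Module.End.mul_apply]; exact J.lie_mem ih

lemma expAdP_apply_mem (J : LieIdeal F L) (x : L) {z : L} (hz : z ∈ J) :
    expAdP F L p x z ∈ J := by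
  rw [expAdP, LinearMap.sum_apply]
  exact J.sum_mem fun r _ => J.smul_mem _ (ad_pow_apply_mem J x r hz)

lemma expAdP_eq_one_add_mul (hp : 0 < p) (x : L) :
    ∃ Q : Module.End F L, Commute (ad F L x) Q ∧ expAdP F L p x = 1 + ad F L x * Q := by
  obtain ⟨q, rfl⟩ := Nat.exists_eq_add_of_lt hp
  refine ⟨∑ r ∈ Finset.range q, (((r + 1).factorial : F)⁻¹) • ad F L x ^ r,
    Commute.sum_right _ _ _ fun r _ => ((Commute.refl _).pow_right r).smul_right _, ?_⟩
  rw [expAdP, zero_add, Finset.sum_range_succ', Finset.mul_sum, add_comm]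
  simp [← pow_succ']

lemma isUnit_expAdP (hp : 0 < p) {x : L} (hx : IsNilpotent (ad F L x)) :
    IsUnit (expAdP F L p x) := by
  obtain ⟨Q, hQ, hexp⟩ := expAdP_eq_one_add_mul (F := F) hp x
  exact hexp ▸ (hQ.isNilpotent_mul_right hx).isUnit_one_add

lemma expAdP_apply_sub_mem (hp : 2 ≤ p) (J : LieIdeal F L) {x y : L} (h : ⁅x, ⁅x, y⁆⁆ ∈ J) :
    expAdP F L p x y - y - ⁅x, y⁆ ∈ J := by
  obtain ⟨q, rfl⟩ := Nat.exists_eq_add_of_le' hp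
  rw [expAdP, LinearMap.sum_apply, Finset.sum_range_succ', Finset.sum_range_succ']
  have hrest : ∀ r, (ad F L x ^ (r + 1 + 1)) y ∈ J := fun r => by
    rw [pow_succ, pow_succ, Module.End.mul_apply, Module.End.mul_apply]
    exact ad_pow_apply_mem J x r h
  simpa using J.sum_mem fun r _ => J.smul_mem _ (hrest r)

lemma isUnit_list_prod_map_expAdP (hp : 0 < p) {l : List L}
    (hl : ∀ x ∈ l, IsNilpotent (ad F L x)) : IsUnit (l.map (expAdP F L p)).prod :=
  List.prod_isUnit fun _ hf => by
    obtain ⟨x, hx, rfl⟩ := List.mem_map.1 hf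
    exact isUnit_expAdP hp (hl x hx)

lemma list_prod_map_expAdP_apply_mem (J : LieIdeal F L) (l : List L) {z : L} (hz : z ∈ J) :
    (l.map (expAdP F L p)).prod z ∈ J := by
  induction l with
  | nil => simpa
  | cons x l ih => simpa using expAdP_apply_mem J x ih

end TruncatedExp

section Core
variable {M K : LieSubalgebra F L}

lemma le_lieCore_iff {J : LieIdeal F L} : J ≤ lieCore F L M ↔ (J : Set L) ⊆ M := by
  refine ⟨fun h => ?_, fun h => le_sSup h⟩
  have hcore : (lieCore F L M).toSubmodule ≤ M.toSubmodule := by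
    rw [lieCore, LieSubmodule.sSup_toSubmodule]
    exact sSup_le (by rintro _ ⟨I, hI, rfl⟩; exact hI)
  exact fun z hz => hcore (h hz)

lemma lieCore_subset : (lieCore F L M : Set L) ⊆ M :=
  le_lieCore_iff.1 le_rfl

lemma lieCore_eq_of_coe_eq_image [FiniteDimensional F L] {f : Module.End F L}
    (hf : Function.Injective f) (hJ : ∀ J : LieIdeal F L, ∀ z ∈ J, f z ∈ J)
    (h : (K : Set L) = f '' M) : lieCore F L M = lieCore F L K := by
  have himage (J : LieIdeal F L) : f '' J = J := by
    have := Submodule.map_eq_of_le_of_finrank_eq (T := J.toSubmodule) hf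
      (Submodule.map_le_iff_le_comap.2 (hJ J)) rfl
    simpa only [Submodule.map_coe, LieSubmodule.coe_toSubmodule] using
      congrArg ((↑) : Submodule F L → Set L) this
  have key (J : LieIdeal F L) : (J : Set L) ⊆ M ↔ (J : Set L) ⊆ K := by
    rw [h, ← Set.image_subset_image_iff hf, himage]
  exact le_antisymm (le_lieCore_iff.2 ((key _).1 lieCore_subset))
    (le_lieCore_iff.2 ((key _).2 lieCore_subset))

lemma exists_covBy_lieCore [FiniteDimensional F L] (hM : IsCoatom M) :
    ∃ A, lieCore F L M ⋖ A := by
  have : WellFoundedLT (LieIdeal F L) := LieSubmodule.wellFoundedLT_of_isArtinian F L L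
  have hCtop : lieCore F L M < ⊤ := lt_top_iff_ne_top.2 fun h =>
    hM.1 (eq_top_iff.2 fun z _ => lieCore_subset (h ▸ LieSubmodule.mem_top z : z ∈ lieCore F L M))
  obtain ⟨A, hCA, -⟩ := exists_covBy_le_of_lt hCtop
  exact ⟨A, hCA⟩

end Core

section Complement
variable {M : LieSubalgebra F L} {A : LieIdeal F L}

lemma sup_eq_top_of_isCoatom (hM : IsCoatom M) (hA : ¬ (A : Set L) ⊆ M) :
    M.toSubmodule ⊔ A.toSubmodule = ⊤ := by
  let S : LieSubalgebra F L :=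
    { M.toSubmodule ⊔ A.toSubmodule with
      lie_mem' := fun {x y} hx hy => by
        obtain ⟨m, hm, a, ha, rfl⟩ := Submodule.mem_sup.1 hx
        obtain ⟨m', hm', a', ha', rfl⟩ := Submodule.mem_sup.1 hy
        rw [add_lie, lie_add, lie_add, add_assoc]
        refine Submodule.add_mem_sup (M.lie_mem hm hm') ?_
        exact add_mem (A.lie_mem ha') (add_mem (lie_mem_left F L A a m' ha) (A.lie_mem ha')) }
  have hMS : M < S := lt_of_le_not_ge (fun z hz => Submodule.mem_sup_left hz)
    fun h => hA fun a ha => h (Submodule.mem_sup_right ha)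
  exact congrArg LieSubalgebra.toSubmodule (hM.2 S hMS)

lemma exists_lieIdeal_of_sup_eq_top (hMA : M.toSubmodule ⊔ A.toSubmodule = ⊤)
    {X : Submodule F L} (hM : ∀ m ∈ M, ∀ x ∈ X, ⁅m, x⁆ ∈ X) (hA : ∀ a ∈ A, ∀ x ∈ X, ⁅a, x⁆ ∈ X) :
    ∃ J : LieIdeal F L, J.toSubmodule = X := by
  refine (X.exists_lieSubmodule_coe_eq_iff L).2 fun y x hx => ?_
  obtain ⟨m, hm, a, ha, rfl⟩ := Submodule.mem_sup.1 (hMA ▸ Submodule.mem_top : y ∈ _)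
  rw [add_lie]
  exact add_mem (hM m hm x hx) (hA a ha x hx)

lemma mem_lieCore_of_sup_eq_top (hMA : M.toSubmodule ⊔ A.toSubmodule = ⊤) (J : LieIdeal F L)
    (hJ : ∀ a ∈ A, ∀ z ∈ M, z ∈ J → ⁅a, z⁆ ∈ lieCore F L M) {z : L} (hzM : z ∈ M) (hzJ : z ∈ J) :
    z ∈ lieCore F L M := by
  obtain ⟨I, hI⟩ := exists_lieIdeal_of_sup_eq_top hMA (X := M.toSubmodule ⊓ J.toSubmodule)
    (fun m hm x hx => ⟨M.lie_mem hm hx.1, J.lie_mem hx.2⟩)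
    (fun a ha x hx => ⟨lieCore_subset (hJ a ha x hx.1 hx.2), J.lie_mem hx.2⟩)
  have hmem (x : L) : x ∈ I ↔ x ∈ M ∧ x ∈ J := by rw [← LieSubmodule.mem_toSubmodule, hI]; rfl
  exact le_lieCore_iff.2 (fun x hx => ((hmem x).1 hx).1) ((hmem z).2 ⟨hzM, hzJ⟩)

lemma mem_lieCore_of_lie_le (hMA : M.toSubmodule ⊔ A.toSubmodule = ⊤) {I : LieIdeal F L}
    (hIA : ⁅I, A⁆ ≤ lieCore F L M) {z : L} (hzM : z ∈ M) (hzI : z ∈ I) : z ∈ lieCore F L M := by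
  refine mem_lieCore_of_sup_eq_top hMA (I ⊔ lieCore F L M) (fun a ha y _ hy => ?_) hzM
    (LieSubmodule.mem_sup_left hzI)
  have hle : ⁅A, I ⊔ lieCore F L M⁆ ≤ lieCore F L M := by
    rw [LieSubmodule.lie_sup, LieSubmodule.lie_comm]
    exact sup_le hIA (LieSubmodule.lie_le_right _ _)
  exact hle (LieSubmodule.lie_mem_lie ha hy)

lemma inf_eq_lieCore_of_lie_le (hMA : M.toSubmodule ⊔ A.toSubmodule = ⊤)
    (hAA : ⁅A, A⁆ ≤ lieCore F L M) (hCA : lieCore F L M ≤ A) :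
    M.toSubmodule ⊓ A.toSubmodule = (lieCore F L M).toSubmodule :=
  le_antisymm (fun _ hz => mem_lieCore_of_lie_le hMA hAA hz.1 hz.2) (le_inf lieCore_subset hCA)

lemma subset_lieCore_of_forall_lie_mem (hMA : M.toSubmodule ⊔ A.toSubmodule = ⊤)
    (h : ∀ m ∈ M, ∀ a ∈ A, ⁅m, a⁆ ∈ lieCore F L M) : (M : Set L) ⊆ lieCore F L M :=
  fun z hz => mem_lieCore_of_sup_eq_top hMA ⊤
    (fun a ha z hz _ => by rw [← lie_skew]; exact neg_mem (h z hz a ha)) hz trivial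

lemma exists_lie_notMem_lieCore {K : LieSubalgebra F L} (hMA : M.toSubmodule ⊔ A.toSubmodule = ⊤)
    (hM : IsCoatom M) (hK : IsCoatom K) (hMK : M ≠ K) (hCK : (lieCore F L M : Set L) ⊆ K) :
    ∃ m₀ ∈ M, ∃ b ∈ A, ⁅m₀, b⁆ ∉ lieCore F L M := by
  by_contra! h
  have hMK' : M ≤ K := fun z hz => hCK (subset_lieCore_of_forall_lie_mem hMA h hz)
  exact hMK ((hM.le_iff.1 hMK').resolve_left hK.1).symm

end Complement

section CovBy
variable {C A : LieIdeal F L}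

lemma lie_le_of_covBy {I : LieIdeal F L} {k : ℕ} (hI : I.lcs L k = ⊥) (hCA : C ⋖ A) :
    ⁅I, A⁆ ≤ C := by
  rcases hCA.eq_or_eq le_sup_right (sup_le (LieSubmodule.lie_le_right A I) hCA.le) with h | h
  · exact le_sup_left.trans h.le
  · exact absurd (LieIdeal.le_of_le_lie_sup hI h.ge) hCA.lt.not_ge

lemma lie_self_le_of_covBy {I : LieIdeal F L} (hCA : C ⋖ A) (hAI : ⁅A, A⁆ ≤ I)
    (hIA : ⁅I, A⁆ ≤ C) : ⁅A, A⁆ ≤ C := by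
  rcases hCA.eq_or_eq le_sup_right (sup_le (LieSubmodule.lie_le_right A A) hCA.le) with h | h
  · exact le_sup_left.trans h.le
  · calc ⁅A, A⁆ ≤ ⁅I ⊔ C, A⁆ := LieSubmodule.mono_lie_left A (h ▸ sup_le_sup_right hAI C)
      _ = ⁅I, A⁆ ⊔ ⁅C, A⁆ := LieSubmodule.sup_lie A I C
      _ ≤ C := sup_le hIA (LieSubmodule.lie_le_left C A)

lemma le_sup_of_covBy (hCA : C ⋖ A) {I : LieIdeal F L} {x : L} (hxA : x ∈ A) (hxI : x ∈ I)
    (hxC : x ∉ C) : A ≤ I ⊔ C := by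
  rcases hCA.eq_or_eq (le_inf hCA.le le_sup_right) (inf_le_left : A ⊓ (I ⊔ C) ≤ A) with h | h
  · exact absurd (h ▸ ⟨hxA, LieSubmodule.mem_sup_left hxI⟩ : x ∈ C) hxC
  · exact inf_eq_left.1 h

lemma eq_or_eq_of_covBy (hCA : C ⋖ A) {X : Submodule F L}
    (hX : ∃ J : LieIdeal F L, J.toSubmodule = X) (hCX : C.toSubmodule ≤ X)
    (hXA : X ≤ A.toSubmodule) : X = C.toSubmodule ∨ X = A.toSubmodule := by
  obtain ⟨J, rfl⟩ := hX
  simpa using hCA.eq_or_eq hCX hXA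

variable {M : LieSubalgebra F L} {m₀ b : L}

/- Schur's lemma for the chief factor `A/C`: as `⁅m₀, M⁆ ⊆ C` and `⁅A, A⁆ ⊆ C`, `ad m₀` induces
an endomorphism of the irreducible `L`-module `A/C`, nonzero because of `b`; its kernel and
its image are ideals between `C` and `A`, so the kernel is `C` and the image is `A`. -/

lemma mem_of_lie_mem_of_covBy (hCA : C ⋖ A) (hMA : M.toSubmodule ⊔ A.toSubmodule = ⊤)
    (hAA : ⁅A, A⁆ ≤ C) (hm₀ : ∀ m ∈ M, ⁅m₀, m⁆ ∈ C) (hb : b ∈ A) (hbC : ⁅m₀, b⁆ ∉ C)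
    {x : L} (hx : x ∈ A) (hxC : ⁅m₀, x⁆ ∈ C) : x ∈ C := by
  let X := A.toSubmodule ⊓ C.toSubmodule.comap (ad F L m₀)
  have hX : ∃ J : LieIdeal F L, J.toSubmodule = X := by
    refine exists_lieIdeal_of_sup_eq_top hMA (fun m hm y hy => ⟨A.lie_mem hy.1, ?_⟩)
      fun a ha y hy => ?_
    · change ⁅m₀, ⁅m, y⁆⁆ ∈ C
      rw [leibniz_lie]
      exact add_mem (lie_mem_left F L C _ _ (hm₀ m hm)) (C.lie_mem hy.2)
    · have hay : ⁅a, y⁆ ∈ C := hAA (LieSubmodule.lie_mem_lie ha hy.1)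
      exact ⟨hCA.le hay, C.lie_mem hay⟩
  rcases eq_or_eq_of_covBy hCA hX (fun c hc => ⟨hCA.le hc, C.lie_mem hc⟩) inf_le_left with h | h
  · have hxX : x ∈ X := ⟨hx, hxC⟩
    rwa [h] at hxX
  · exact absurd (h ▸ hb : b ∈ X).2 hbC

lemma exists_lie_add_eq_of_covBy (hCA : C ⋖ A) (hMA : M.toSubmodule ⊔ A.toSubmodule = ⊤)
    (hAA : ⁅A, A⁆ ≤ C) (hm₀ : ∀ m ∈ M, ⁅m₀, m⁆ ∈ C) (hb : b ∈ A) (hbC : ⁅m₀, b⁆ ∉ C)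
    {t : L} (ht : t ∈ A) : ∃ a ∈ A, ∃ c ∈ C, ⁅m₀, a⁆ + c = t := by
  let X := A.toSubmodule.map (ad F L m₀) ⊔ C.toSubmodule
  have hXA : X ≤ A.toSubmodule :=
    sup_le (Submodule.map_le_iff_le_comap.2 fun a ha => A.lie_mem ha) hCA.le
  have hX : ∃ J : LieIdeal F L, J.toSubmodule = X := by
    refine exists_lieIdeal_of_sup_eq_top hMA (fun m hm y hy => ?_)
      fun a ha y hy => Submodule.mem_sup_right (hAA (LieSubmodule.lie_mem_lie ha (hXA hy)))
    obtain ⟨_, ⟨a, ha, rfl⟩, c, hc, rfl⟩ := Submodule.mem_sup.1 hy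
    have hmm₀ : ⁅m, m₀⁆ ∈ C := by rw [← lie_skew]; exact neg_mem (hm₀ m hm)
    rw [lie_add, ad_apply, leibniz_lie, add_comm _ ⁅m₀, _⁆, add_assoc]
    exact Submodule.add_mem_sup ⟨_, A.lie_mem ha, rfl⟩
      (add_mem (lie_mem_left F L C _ _ hmm₀) (C.lie_mem hc))
  rcases eq_or_eq_of_covBy hCA hX le_sup_right hXA with h | h
  · exact absurd (h ▸ Submodule.mem_sup_left ⟨b, hb, rfl⟩ : ⁅m₀, b⁆ ∈ C.toSubmodule) hbC
  · obtain ⟨_, ⟨a, ha, rfl⟩, c, hc, hac⟩ := Submodule.mem_sup.1 (h ▸ ht : t ∈ X)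
    exact ⟨a, ha, c, hc, hac⟩

end CovBy

section Conjugacy
variable {M K : LieSubalgebra F L} {A C : LieIdeal F L}

lemma exists_add_mem_of_sup_eq_top (hKA : K.toSubmodule ⊔ A.toSubmodule = ⊤) (y : L) :
    ∃ u ∈ A, y + u ∈ K := by
  obtain ⟨k, hk, a, ha, rfl⟩ := Submodule.mem_sup.1 (hKA ▸ Submodule.mem_top : y ∈ _)
  exact ⟨-a, neg_mem ha, by simpa using hk⟩

lemma lie_sub_lie_mem_of_add_mem (hCK : (C : Set L) ⊆ K)
    (hKAC : K.toSubmodule ⊓ A.toSubmodule ≤ C.toSubmodule)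
    (hAA : ⁅A, A⁆ ≤ C) {m m' u u' : L} (hmm' : ⁅m, m'⁆ ∈ C) (hu : u ∈ A) (hu' : u' ∈ A)
    (hmu : m + u ∈ K) (hmu' : m' + u' ∈ K) : ⁅m, u'⁆ - ⁅m', u⁆ ∈ C := by
  have hexp : ⁅m, u'⁆ - ⁅m', u⁆ = ⁅m + u, m' + u'⁆ - ⁅m, m'⁆ - ⁅u, u'⁆ := by
    rw [add_lie, lie_add, lie_add, ← lie_skew m' u]
    abel
  refine hKAC ⟨?_, sub_mem (A.lie_mem hu') (A.lie_mem hu)⟩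
  rw [hexp]
  exact sub_mem (sub_mem (K.lie_mem hmu hmu') (hCK hmm'))
    (hCK (hAA (LieSubmodule.lie_mem_lie hu hu')))

/-- Choosing `u(m) ∈ A` with `m + u(m) ∈ K` defines a 1-cocycle of `M` with values in `A/C`
(`lie_sub_lie_mem_of_add_mem`); the bijectivity of `ad m₀` on `A/C` makes it a coboundary. -/
lemma exists_forall_add_lie_mem (hKA : K.toSubmodule ⊔ A.toSubmodule = ⊤)
    (hCK : (C : Set L) ⊆ K)
    (hKAC : K.toSubmodule ⊓ A.toSubmodule ≤ C.toSubmodule) (hAA : ⁅A, A⁆ ≤ C)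
    (hMM : ∀ m ∈ M, ∀ m' ∈ M, ⁅m, m'⁆ ∈ C) {m₀ : L} (hm₀ : m₀ ∈ M)
    (hinj : ∀ x ∈ A, ⁅m₀, x⁆ ∈ C → x ∈ C)
    (hsurj : ∀ t ∈ A, ∃ a ∈ A, ∃ c ∈ C, ⁅m₀, a⁆ + c = t) :
    ∃ a ∈ A, ∀ m ∈ M, m + ⁅a, m⁆ ∈ K := by
  obtain ⟨u₀, hu₀, hmu₀⟩ := exists_add_mem_of_sup_eq_top hKA m₀
  obtain ⟨a, ha, c, hc, hac⟩ := hsurj (-u₀) (neg_mem hu₀)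
  have hau₀ : ⁅m₀, a⁆ + u₀ ∈ C := by
    have hu₀' : u₀ = -(⁅m₀, a⁆ + c) := by rw [hac, neg_neg]
    convert neg_mem hc using 1
    rw [hu₀']
    abel
  refine ⟨a, ha, fun m hm => ?_⟩
  obtain ⟨u, hu, hmu⟩ := exists_add_mem_of_sup_eq_top hKA m
  have hcob : u + ⁅m, a⁆ ∈ C := by
    refine hinj _ (add_mem hu (A.lie_mem ha)) ?_
    have hexp : ⁅m₀, u + ⁅m, a⁆⁆
        = (⁅m₀, u⁆ - ⁅m, u₀⁆) + ⁅⁅m₀, m⁆, a⁆ + ⁅m, ⁅m₀, a⁆ + u₀⁆ := by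
      rw [lie_add, leibniz_lie m₀ m a, lie_add]
      abel
    rw [hexp]
    refine add_mem (add_mem ?_ (lie_mem_left F L C _ _ (hMM _ hm₀ _ hm))) (C.lie_mem hau₀)
    exact lie_sub_lie_mem_of_add_mem hCK hKAC hAA (hMM _ hm₀ _ hm) hu₀ hu hmu₀ hmu
  have hsplit : m + ⁅a, m⁆ = (m + u) - (u + ⁅m, a⁆) := by
    rw [← lie_skew]
    abel
  rw [hsplit]
  exact sub_mem hmu (hCK hcob)

lemma coe_eq_image_expAdP [FiniteDimensional F L] {p : ℕ} (hp : 2 ≤ p) {n : L}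
    (hn : IsNilpotent (ad F L n)) (hnA : n ∈ A) (hAA : ⁅A, A⁆ ≤ C) (hCK : (C : Set L) ⊆ K)
    (hnK : ∀ m ∈ M, m + ⁅n, m⁆ ∈ K) (hMK : finrank F M.toSubmodule = finrank F K.toSubmodule) :
    (K : Set L) = expAdP F L p n '' M := by
  have hle : M.toSubmodule.map (expAdP F L p n) ≤ K.toSubmodule := by
    refine Submodule.map_le_iff_le_comap.2 fun m hm => ?_
    have hr := expAdP_apply_sub_mem hp C
      (hAA (LieSubmodule.lie_mem_lie hnA (lie_mem_left F L A n m hnA)))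
    have hsplit : expAdP F L p n m = (m + ⁅n, m⁆) + (expAdP F L p n m - m - ⁅n, m⁆) := by abel
    change expAdP F L p n m ∈ K
    rw [hsplit]
    exact add_mem (hnK m hm) (hCK hr)
  have hinj := ((Module.End.isUnit_iff _).1 (isUnit_expAdP (p := p) (by omega) hn)).1
  have := Submodule.map_eq_of_le_of_finrank_eq hinj hle hMK
  simpa only [Submodule.map_coe, LieSubalgebra.coe_toSubmodule] using
    (congrArg ((↑) : Submodule F L → Set L) this).symm

theorem exists_coe_eq_image_expAdP_of_lieCore_eq [FiniteDimensional F L] {p : ℕ} (hp : 2 ≤ p)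
    {I : LieIdeal F L} (hI : I.lcs L p = ⊥) (hLI : ⁅(⊤ : LieIdeal F L), ⊤⁆ ≤ I)
    (hM : IsCoatom M) (hK : IsCoatom K) (hMK : M ≠ K) (hcore : lieCore F L M = lieCore F L K) :
    ∃ n ∈ I, (K : Set L) = expAdP F L p n '' M := by
  obtain ⟨A, hCA⟩ := exists_covBy_lieCore hM
  set C := lieCore F L M
  have hCK : (C : Set L) ⊆ K := hcore ▸ lieCore_subset
  have hmemI (x y : L) : ⁅x, y⁆ ∈ I :=
    hLI (LieSubmodule.lie_mem_lie (LieSubmodule.mem_top x) (LieSubmodule.mem_top y))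
  have hIA := lie_le_of_covBy hI hCA
  have hAA := lie_self_le_of_covBy hCA ((LieSubmodule.mono_lie le_top le_top).trans hLI) hIA
  have hMA := sup_eq_top_of_isCoatom hM fun h => hCA.lt.not_ge (le_lieCore_iff.2 h)
  have hKA := sup_eq_top_of_isCoatom hK fun h => hCA.lt.not_ge (hcore ▸ le_lieCore_iff.2 h)
  have hMAC := inf_eq_lieCore_of_lie_le hMA hAA hCA.le
  have hKAC : K.toSubmodule ⊓ A.toSubmodule = C.toSubmodule :=
    hcore ▸ inf_eq_lieCore_of_lie_le hKA (hcore ▸ hAA) (hcore ▸ hCA.le)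
  have hMM : ∀ m ∈ M, ∀ m' ∈ M, ⁅m, m'⁆ ∈ C := fun m hm m' hm' =>
    mem_lieCore_of_lie_le hMA hIA (M.lie_mem hm hm') (hmemI m m')
  obtain ⟨m₀, hm₀, b, hb, hbC⟩ := exists_lie_notMem_lieCore hMA hM hK hMK hCK
  obtain ⟨a, ha, haK⟩ := exists_forall_add_lie_mem hKA hCK hKAC.le hAA hMM hm₀
    (fun x hx => mem_of_lie_mem_of_covBy hCA hMA hAA (hMM m₀ hm₀) hb hbC hx)
    (fun t ht => exists_lie_add_eq_of_covBy hCA hMA hAA (hMM m₀ hm₀) hb hbC ht)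
  obtain ⟨n, hn, c, hc, rfl⟩ :=
    (LieSubmodule.mem_sup _ _ _).1 (le_sup_of_covBy hCA (A.lie_mem hb) (hmemI m₀ b) hbC ha)
  refine ⟨n, hn, coe_eq_image_expAdP hp ⟨p, LieIdeal.ad_pow_eq_zero_of_lcs_eq_bot hI hn⟩
    (by simpa using sub_mem ha (hCA.le hc)) hAA hCK (fun m hm => ?_) ?_⟩
  · convert sub_mem (haK m hm) (hCK (lie_mem_left F L C c m hc)) using 1
    rw [add_lie]
    abel
  · exact Submodule.finrank_eq_of_sup_eq_of_inf_eq (hMA.trans hKA.symm) (hMAC.trans hKAC.symm)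

end Conjugacy

end

theorem maximal_subalgebras_conjugate_iff_cores_eq_charP_general (F : Type*) [Field F]
    (L : Type*) [LieRing L] [LieAlgebra F L] [FiniteDimensional F L]
    (p : ℕ) (hp : p.Prime)
    (hclass : LieModule.lowerCentralSeries F
        (⁅(⊤ : LieIdeal F L), (⊤ : LieIdeal F L)⁆ : LieIdeal F L)
        (⁅(⊤ : LieIdeal F L), (⊤ : LieIdeal F L)⁆ : LieIdeal F L) (p - 1) = ⊥)
    (M K : LieSubalgebra F L) (hM : IsCoatom M) (hK : IsCoatom K) :
    (∃ l : List L, (∀ x ∈ l, x ∈ (⁅(⊤ : LieIdeal F L), (⊤ : LieIdeal F L)⁆ : LieIdeal F L)) ∧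
        (K : Set L) = ⇑((l.map (expAdP F L p)).prod) '' (M : Set L))
      ↔ lieCore F L M = lieCore F L K := by
  have hN : (⁅(⊤ : LieIdeal F L), ⊤⁆ : LieIdeal F L).lcs L p = ⊥ := by
    simpa [Nat.sub_add_cancel hp.one_le] using
      LieIdeal.lcs_succ_eq_bot_of_lowerCentralSeries_eq_bot hclass
  constructor
  · rintro ⟨l, hl, hKM⟩
    have hunit := isUnit_list_prod_map_expAdP hp.pos fun x hx =>
      ⟨p, LieIdeal.ad_pow_eq_zero_of_lcs_eq_bot hN (hl x hx)⟩
    exact lieCore_eq_of_coe_eq_image ((Module.End.isUnit_iff _).1 hunit).1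
      (fun J _ => list_prod_map_expAdP_apply_mem J l) hKM
  · intro hcore
    by_cases hMK : M = K
    · exact ⟨[], by simp, by simp [hMK]⟩
    obtain ⟨n, hn, hnK⟩ :=
      exists_coe_eq_image_expAdP_of_lieCore_eq hp.two_le hN le_rfl hM hK hMK hcore
    exact ⟨[n], by simpa using hn, by simpa using hnK⟩

/-- Over a field of characteristic `p > 0`, if the derived algebra `L² = ⁅L,L⁆` of the
finite-dimensional solvable Lie algebra `L` is nilpotent of class `< p`, then two maximal
subalgebras `M`, `K` of `L` are conjugate in `L` (under the inner automorphisms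
`exp (ad x)`, `x ∈ L²`) if and only if their cores coincide. -/
theorem maximal_subalgebras_conjugate_iff_cores_eq_charP (F : Type*) [Field F]
    (L : Type*) [LieRing L] [LieAlgebra F L] [FiniteDimensional F L]
    [LieAlgebra.IsSolvable L]
    (p : ℕ) [CharP F p] (hp : p.Prime)
    (hclass : LieModule.lowerCentralSeries F
        (⁅(⊤ : LieIdeal F L), (⊤ : LieIdeal F L)⁆ : LieIdeal F L)
        (⁅(⊤ : LieIdeal F L), (⊤ : LieIdeal F L)⁆ : LieIdeal F L) (p - 1) = ⊥)
    (M K : LieSubalgebra F L) (hM : IsCoatom M) (hK : IsCoatom K) :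
    (∃ l : List L, (∀ x ∈ l, x ∈ (⁅(⊤ : LieIdeal F L), (⊤ : LieIdeal F L)⁆ : LieIdeal F L)) ∧
        (K : Set L) = ⇑((l.map (expAdP F L p)).prod) '' (M : Set L))
      ↔ lieCore F L M = lieCore F L K :=
  maximal_subalgebras_conjugate_iff_cores_eq_charP_general F L p hp hclass M K hM hK
end

section
/- Let L be a finite-dimensional solvable Lie algebra over any field, and let M, K be maximal subalgebras of L with K_L ⊄ M_L (the core of K not contained in the core of M). Then M ∩ K is a maximal subalgebra of M. -/
theorem lieCore_le {F : Type*} [Field F] {L : Type*} [LieRing L] [LieAlgebra F L]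
    (M : LieSubalgebra F L) : (lieCore F L M).toSubmodule ≤ M.toSubmodule := by
  rw [lieCore, LieSubmodule.sSup_toSubmodule]
  exact sSup_le fun _ ⟨_, hI, hI'⟩ => hI' ▸ hI

theorem le_lieCore_iff_s13 {F : Type*} [Field F] {L : Type*} [LieRing L] [LieAlgebra F L]
    {M : LieSubalgebra F L} {I : LieIdeal F L} :
    I ≤ lieCore F L M ↔ I.toSubmodule ≤ M.toSubmodule :=
  ⟨fun h => ((LieSubmodule.toSubmodule_le_toSubmodule _ _).2 h).trans (lieCore_le M),
    fun h => le_sSup h⟩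

namespace LieSubalgebra

variable {R L : Type*} [CommRing R] [LieRing L] [LieAlgebra R L]

def addIdeal (S : LieSubalgebra R L) (I : LieIdeal R L) : LieSubalgebra R L where
  toSubmodule := S.toSubmodule ⊔ I.toSubmodule
  lie_mem' {x y} hx hy := by
    obtain ⟨s, hs, i, hi, rfl⟩ := Submodule.mem_sup.1 hx
    obtain ⟨t, ht, j, hj, rfl⟩ := Submodule.mem_sup.1 hy
    refine Submodule.mem_sup.2
      ⟨⁅s, t⁆, S.lie_mem hs ht, ⁅s, j⁆ + ⁅i, t⁆ + ⁅i, j⁆, ?_, ?_⟩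
    · have hit : ⁅i, t⁆ ∈ I := by rw [← lie_skew]; exact neg_mem (I.lie_mem hi)
      exact add_mem (add_mem (I.lie_mem hj) hit) (I.lie_mem hj)
    · simp only [add_lie, lie_add]
      abel

variable {S T M K : LieSubalgebra R L} {I : LieIdeal R L}

@[simp]
theorem toSubmodule_addIdeal : (S.addIdeal I).toSubmodule = S.toSubmodule ⊔ I.toSubmodule := rfl

theorem le_addIdeal : S ≤ S.addIdeal I :=
  (toSubmodule_le_toSubmodule _ _).1 le_sup_left

theorem addIdeal_mono (h : S ≤ T) : S.addIdeal I ≤ T.addIdeal I :=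
  (toSubmodule_le_toSubmodule _ _).1 (sup_le_sup_right ((toSubmodule_le_toSubmodule _ _).2 h) _)

theorem addIdeal_eq_top_of_isCoatom (hM : IsCoatom M) (hI : ¬ I.toSubmodule ≤ M.toSubmodule) :
    M.addIdeal I = ⊤ :=
  (hM.ne_iff_eq_top le_addIdeal).1 fun h => hI <| by
    rw [← h, toSubmodule_addIdeal]
    exact le_sup_right

theorem inf_addIdeal_eq (hIK : I.toSubmodule ≤ K.toSubmodule) (hM : M.addIdeal I = ⊤) :
    (M ⊓ K).addIdeal I = K := by
  rw [← toSubmodule_inj, toSubmodule_addIdeal, inf_toSubmodule, inf_comm,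
    inf_sup_assoc_of_le _ hIK, ← toSubmodule_addIdeal, hM, top_toSubmodule, inf_top_eq]

theorem le_of_addIdeal_eq_top (hSM : S ≤ M)
    (hIM : I.toSubmodule ⊓ M.toSubmodule ≤ S.toSubmodule) (hS : S.addIdeal I = ⊤) :
    M ≤ S := by
  rw [← toSubmodule_le_toSubmodule]
  calc M.toSubmodule = (S.toSubmodule ⊔ I.toSubmodule) ⊓ M.toSubmodule := by
        rw [← toSubmodule_addIdeal, hS, top_toSubmodule, top_inf_eq]
    _ = S.toSubmodule ⊔ I.toSubmodule ⊓ M.toSubmodule :=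
        sup_inf_assoc_of_le _ ((toSubmodule_le_toSubmodule _ _).2 hSM)
    _ ≤ S.toSubmodule := sup_le le_rfl hIM

end LieSubalgebra

open LieSubalgebra in
theorem inter_maximal_of_core_not_le_general (F : Type*) [Field F]
    (L : Type*) [LieRing L] [LieAlgebra F L]
    (M K : LieSubalgebra F L) (hM : IsCoatom M) (hK : IsCoatom K)
    (hcore : ¬ lieCore F L K ≤ lieCore F L M) :
    M ⊓ K < M ∧ ∀ S : LieSubalgebra F L, M ⊓ K < S → S ≤ M → S = M := by
  set C := lieCore F L K
  have hCK : C.toSubmodule ≤ K.toSubmodule := lieCore_le K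
  have hMC : M.addIdeal C = ⊤ :=
    addIdeal_eq_top_of_isCoatom hM fun h => hcore (le_lieCore_iff_s13.2 h)
  have hK_eq : (M ⊓ K).addIdeal C = K := inf_addIdeal_eq hCK hMC
  have hMK : M ⊓ K < M := inf_le_left.lt_of_ne fun h => by
    have hKM : K = M := (hM.le_iff_eq hK.ne_top).1 (inf_eq_left.1 h)
    exact hcore (hKM ▸ le_rfl)
  refine ⟨hMK, fun S hlt hSM => le_antisymm hSM (le_of_addIdeal_eq_top (I := C) hSM ?_ ?_)⟩
  · have hCM : C.toSubmodule ⊓ M.toSubmodule ≤ (M ⊓ K).toSubmodule := by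
      rw [inf_toSubmodule, inf_comm]
      exact inf_le_inf_left _ hCK
    exact hCM.trans ((toSubmodule_le_toSubmodule _ _).2 hlt.le)
  · have hKS : K ≤ S.addIdeal C := hK_eq ▸ addIdeal_mono hlt.le
    refine (hK.ne_iff_eq_top hKS).1 fun h => hlt.not_ge (le_inf hSM ?_)
    exact h ▸ le_addIdeal

/-- If `M`, `K` are maximal subalgebras of a finite-dimensional solvable Lie algebra `L`
with `K_L ⊄ M_L`, then `M ∩ K` is a maximal subalgebra of `M`. -/
theorem inter_maximal_of_core_not_le (F : Type*) [Field F]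
    (L : Type*) [LieRing L] [LieAlgebra F L] [FiniteDimensional F L]
    [LieAlgebra.IsSolvable L]
    (M K : LieSubalgebra F L) (hM : IsCoatom M) (hK : IsCoatom K)
    (hcore : ¬ lieCore F L K ≤ lieCore F L M) :
    M ⊓ K < M ∧ ∀ S : LieSubalgebra F L, M ⊓ K < S → S ≤ M → S = M :=
  inter_maximal_of_core_not_le_general F L M K hM hK hcore
end

section
/- Let L be a finite-dimensional solvable Lie algebra and A a minimal ideal of L. Let M, K be complements to A in L whose cores are distinct (equivalently, M and K are not conjugate under I(L:A)). Then M ∩ K is a maximal subalgebra of both M and K. -/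
/-!
The minimal ideal `A` is abelian, so it lies in its centralizer `C = LieModule.ker F L A`, and the
core of a complement `N` is `C ∩ N`. If the cores of `M` and `K` differ, minimality of `A` gives
`A ≤ M_L + K_L`, hence `L = (M ∩ K) + C`: every element of `L` acts on `A` like an element of
`M ∩ K`. For `M ∩ K < S ≤ M` the subspace `A ∩ (S + K)` is then an ideal, nonzero because
`S ⊄ K`, so it is all of `A`; thus `S + K = L`, and `S = M`.
-/

open LieAlgebra

namespace LieIdeal

section CommRing

variable {R L : Type*} [CommRing R] [LieRing L] [LieAlgebra R L] {A : LieIdeal R L}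
  {M K S : LieSubalgebra R L}

variable (A) in
structure IsComplement (M : LieSubalgebra R L) : Prop where
  exists_add : ∀ x : L, ∃ a ∈ A, ∃ m ∈ M, x = a + m
  eq_zero : ∀ x : L, x ∈ A → x ∈ M → x = 0

lemma isLieAbelian_of_isAtom_s15 [IsSolvable L] (hA : IsAtom A) : IsLieAbelian A := by
  by_contra hnab
  have hAA : ⁅A, A⁆ = A := lie_eq_self_of_isAtom_of_nonabelian A hA hnab
  have hD : ∀ k, derivedSeriesOfIdeal R L k A = A := by
    intro k
    induction k with
    | zero => rfl
    | succ k ih => rw [derivedSeriesOfIdeal_succ, ih, hAA]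
  obtain ⟨k, hk⟩ := IsSolvable.solvable R A
  rw [derivedSeries_def, LieIdeal.derivedSeries_eq_bot_iff, hD] at hk
  exact hA.1 hk

lemma mem_ker_iff_lie_eq_zero {x : L} : x ∈ LieModule.ker R L A ↔ ∀ a ∈ A, ⁅x, a⁆ = 0 := by
  simp only [LieModule.mem_ker, Subtype.forall, ← Subtype.val_inj, LieSubmodule.coe_bracket,
    LieSubmodule.coe_zero]

lemma _root_.IsAtom.eq_bot_or_eq_of_lie_mem (hA : IsAtom A) {N : Submodule R L}
    (hNA : N ≤ A.toSubmodule) (hN : ∀ (x : L) {n : L}, n ∈ N → ⁅x, n⁆ ∈ N) :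
    N = ⊥ ∨ N = A.toSubmodule := by
  let I : LieIdeal R L := { N with lie_mem := hN _ }
  rcases hA.le_iff.mp (show I ≤ A from hNA) with h | h
  · exact Or.inl (congrArg LieSubmodule.toSubmodule h)
  · exact Or.inr (congrArg LieSubmodule.toSubmodule h)

lemma IsComplement.eq_of_le (hM : A.IsComplement M) (hK : A.IsComplement K) (hMK : M ≤ K) :
    M = K := by
  refine le_antisymm hMK fun k hk => ?_
  obtain ⟨a, ha, m, hm, rfl⟩ := hM.exists_add k
  have ha0 : a = 0 := hK.eq_zero a ha (by simpa using K.sub_mem hk (hMK hm))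
  simpa [ha0] using hm

lemma lie_mem_inf_sup_of_sub_mem_ker {x y n : L} (hyS : y ∈ S) (hyK : y ∈ K)
    (hxy : x - y ∈ LieModule.ker R L A)
    (hn : n ∈ A.toSubmodule ⊓ (S.toSubmodule ⊔ K.toSubmodule)) :
    ⁅x, n⁆ ∈ A.toSubmodule ⊓ (S.toSubmodule ⊔ K.toSubmodule) := by
  obtain ⟨hnA, hnSK⟩ := Submodule.mem_inf.mp hn
  obtain ⟨s, hs, k, hk, rfl⟩ := Submodule.mem_sup.mp hnSK
  have hx : ⁅x, s + k⁆ = ⁅y, s⁆ + ⁅y, k⁆ := by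
    rw [← lie_add, ← sub_eq_zero, ← sub_lie, mem_ker_iff_lie_eq_zero.mp hxy _ hnA]
  refine Submodule.mem_inf.mpr ⟨A.lie_mem hnA, ?_⟩
  rw [hx]
  exact Submodule.add_mem_sup (S.lie_mem hyS hs) (K.lie_mem hyK hk)

lemma toSubmodule_le_sup_of_inf_lt (hA : IsAtom A) (hK : A.IsComplement K)
    (hL : ∀ x : L, ∃ y ∈ M ⊓ K, x - y ∈ LieModule.ker R L A) (hS : M ⊓ K < S) (hSM : S ≤ M) :
    A.toSubmodule ≤ S.toSubmodule ⊔ K.toSubmodule := by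
  have hinv (x : L) {n : L} (hn : n ∈ A.toSubmodule ⊓ (S.toSubmodule ⊔ K.toSubmodule)) :
      ⁅x, n⁆ ∈ A.toSubmodule ⊓ (S.toSubmodule ⊔ K.toSubmodule) := by
    obtain ⟨y, hy, hxy⟩ := hL x
    exact lie_mem_inf_sup_of_sub_mem_ker (hS.le hy) hy.2 hxy hn
  rcases hA.eq_bot_or_eq_of_lie_mem inf_le_left hinv with h | h
  · obtain ⟨s, hs, hsMK⟩ := SetLike.exists_of_lt hS
    obtain ⟨a, ha, k, hk, rfl⟩ := hK.exists_add s
    have haSK : a ∈ A.toSubmodule ⊓ (S.toSubmodule ⊔ K.toSubmodule) :=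
      ⟨ha, by simpa using Submodule.sub_mem_sup (S := S.toSubmodule) (T := K.toSubmodule) hs hk⟩
    rw [h, Submodule.mem_bot] at haSK
    subst haSK
    exact absurd ⟨hSM hs, by simpa using hk⟩ hsMK
  · exact h ▸ inf_le_right

lemma le_of_toSubmodule_le_sup (hK : A.IsComplement K) (hMKS : M ⊓ K ≤ S) (hSM : S ≤ M)
    (hA : A.toSubmodule ≤ S.toSubmodule ⊔ K.toSubmodule) : M ≤ S := by
  intro m hm
  obtain ⟨a, ha, k, hk, rfl⟩ := hK.exists_add m
  obtain ⟨s, hs, k', hk', rfl⟩ := Submodule.mem_sup.mp (hA ha)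
  have hrest : k' + k ∈ S := hMKS
    ⟨by simpa [add_assoc] using M.sub_mem hm (hSM hs), K.add_mem hk' hk⟩
  simpa [add_assoc] using S.add_mem hs hrest

end CommRing

section Field

variable {F L : Type*} [Field F] [LieRing L] [LieAlgebra F L] {A : LieIdeal F L}
  {M K : LieSubalgebra F L}

lemma IsComplement.mem_lieCore_iff (hM : A.IsComplement M) {x : L} :
    x ∈ lieCore F L M ↔ x ∈ M ∧ x ∈ LieModule.ker F L A := by
  let J : LieIdeal F L :=
    { (LieModule.ker F L A).toSubmodule ⊓ M.toSubmodule with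
      lie_mem := fun {y c} hc => by
        obtain ⟨hcC, hcM⟩ := Submodule.mem_inf.mp hc
        obtain ⟨a, ha, m, hm, rfl⟩ := hM.exists_add y
        have hac : ⁅a, c⁆ = 0 := by
          rw [← lie_skew, mem_ker_iff_lie_eq_zero.mp hcC a ha, neg_zero]
        refine Submodule.mem_inf.mpr ⟨(LieModule.ker F L A).lie_mem hcC, ?_⟩
        simpa [add_lie, hac] using M.lie_mem hm hcM }
  have hcore : lieCore F L M = J := by
    refine le_antisymm (sSup_le fun I hI x hx => ?_) (le_sSup fun x hx => hx.2)
    refine Submodule.mem_inf.mpr ⟨mem_ker_iff_lie_eq_zero.mpr fun a ha => ?_, hI hx⟩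
    exact hM.eq_zero _ (A.lie_mem ha) (hI (lie_mem_left F L I x a hx))
  rw [hcore]
  exact and_comm

lemma lieCore_le_lieCore_of_inf_eq_bot (hAb : IsLieAbelian A) (hM : A.IsComplement M)
    (hK : A.IsComplement K) (h : A ⊓ (lieCore F L M ⊔ lieCore F L K) = ⊥) :
    lieCore F L K ≤ lieCore F L M := by
  intro k hk
  obtain ⟨hkK, hkC⟩ := hK.mem_lieCore_iff.mp hk
  obtain ⟨a, ha, m, hm, rfl⟩ := hM.exists_add k
  have hmC : m ∈ LieModule.ker F L A := by
    simpa using (LieModule.ker F L A).sub_mem hkC ((isLieAbelian_iff F L).mp hAb ha)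
  have hm' : m ∈ lieCore F L M := hM.mem_lieCore_iff.mpr ⟨hm, hmC⟩
  have ha0 : a ∈ A ⊓ (lieCore F L M ⊔ lieCore F L K) := by
    refine (LieSubmodule.mem_inf _ _ a).mpr ⟨ha, ?_⟩
    have hsub := sub_mem (LieSubmodule.mem_sup_right hk) (LieSubmodule.mem_sup_left hm')
    rwa [add_sub_cancel_right] at hsub
  rw [h, LieSubmodule.mem_bot] at ha0
  simpa [ha0] using hm'

lemma le_lieCore_sup_lieCore (hA : IsAtom A) (hAb : IsLieAbelian A) (hM : A.IsComplement M)
    (hK : A.IsComplement K) (hcore : lieCore F L M ≠ lieCore F L K) :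
    A ≤ lieCore F L M ⊔ lieCore F L K := by
  rcases hA.le_iff.mp (inf_le_left : A ⊓ (lieCore F L M ⊔ lieCore F L K) ≤ A) with h | h
  · refine absurd (le_antisymm ?_ (lieCore_le_lieCore_of_inf_eq_bot hAb hM hK h)) hcore
    exact lieCore_le_lieCore_of_inf_eq_bot hAb hK hM (by rwa [sup_comm])
  · exact inf_eq_left.mp h

lemma exists_mem_inf_sub_mem_ker (hAb : IsLieAbelian A) (hM : A.IsComplement M)
    (hK : A.IsComplement K) (hAMK : A ≤ lieCore F L M ⊔ lieCore F L K) (x : L) :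
    ∃ y ∈ M ⊓ K, x - y ∈ LieModule.ker F L A := by
  obtain ⟨a, ha, m, hm, rfl⟩ := hM.exists_add x
  obtain ⟨a', ha', k, hk, rfl⟩ := hK.exists_add m
  obtain ⟨c, hc, d, hd, rfl⟩ := LieSubmodule.mem_sup _ _ _ |>.mp (hAMK ha')
  obtain ⟨hcM, hcC⟩ := hM.mem_lieCore_iff.mp hc
  obtain ⟨hdK, -⟩ := hK.mem_lieCore_iff.mp hd
  refine ⟨d + k, ⟨?_, K.add_mem hdK hk⟩, ?_⟩
  · rw [show d + k = c + d + k - c by abel]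
    exact M.sub_mem hm hcM
  · rw [show a + (c + d + k) - (d + k) = a + c by abel]
    exact (LieModule.ker F L A).add_mem ((isLieAbelian_iff F L).mp hAb ha) hcC

lemma inf_covBy_left (hA : IsAtom A) (hAb : IsLieAbelian A) (hM : A.IsComplement M)
    (hK : A.IsComplement K) (hcore : lieCore F L M ≠ lieCore F L K) : M ⊓ K ⋖ M := by
  refine ⟨inf_le_left.lt_of_ne fun h => hcore ?_, fun S hS hSM => hSM.not_ge ?_⟩
  · rw [hM.eq_of_le hK (inf_eq_left.mp h)]
  · have hL := exists_mem_inf_sub_mem_ker hAb hM hK (le_lieCore_sup_lieCore hA hAb hM hK hcore)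
    exact le_of_toSubmodule_le_sup hK hS.le hSM.le
      (toSubmodule_le_sup_of_inf_lt hA hK hL hS hSM.le)

end Field

end LieIdeal

theorem inter_maximal_of_nonconjugate_complements_general (F : Type*) [Field F]
    (L : Type*) [LieRing L] [LieAlgebra F L]
    [LieAlgebra.IsSolvable L]
    (A : LieIdeal F L) (hA : IsAtom A) (M K : LieSubalgebra F L)
    (hM₁ : ∀ x : L, ∃ a ∈ A, ∃ m ∈ M, x = a + m)
    (hM₂ : ∀ x : L, x ∈ A → x ∈ M → x = 0)
    (hK₁ : ∀ x : L, ∃ a ∈ A, ∃ m ∈ K, x = a + m)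
    (hK₂ : ∀ x : L, x ∈ A → x ∈ K → x = 0)
    (hcore : lieCore F L M ≠ lieCore F L K) :
    (M ⊓ K < M ∧ ∀ S : LieSubalgebra F L, M ⊓ K < S → S ≤ M → S = M) ∧
    (M ⊓ K < K ∧ ∀ S : LieSubalgebra F L, M ⊓ K < S → S ≤ K → S = K) := by
  have hAb := LieIdeal.isLieAbelian_of_isAtom_s15 hA
  have hM : A.IsComplement M := ⟨hM₁, hM₂⟩
  have hK : A.IsComplement K := ⟨hK₁, hK₂⟩
  have hMK := LieIdeal.inf_covBy_left hA hAb hM hK hcore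
  have hKM := LieIdeal.inf_covBy_left hA hAb hK hM hcore.symm
  rw [inf_comm] at hKM
  exact ⟨⟨hMK.lt, fun S hS hSM => hSM.eq_of_not_lt (hMK.2 hS)⟩,
    ⟨hKM.lt, fun S hS hSK => hSK.eq_of_not_lt (hKM.2 hS)⟩⟩

/-- Let `A` be a minimal ideal of a finite-dimensional solvable Lie algebra `L` and let
`M`, `K` be complements to `A` in `L` with distinct cores (equivalently, not conjugate
under `I(L:A)`).  Then `M ∩ K` is a maximal subalgebra of both `M` and `K`. -/
theorem inter_maximal_of_nonconjugate_complements (F : Type*) [Field F]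
    (L : Type*) [LieRing L] [LieAlgebra F L] [FiniteDimensional F L]
    [LieAlgebra.IsSolvable L]
    (A : LieIdeal F L) (hA : IsAtom A) (M K : LieSubalgebra F L)
    (hM₁ : ∀ x : L, ∃ a ∈ A, ∃ m ∈ M, x = a + m)
    (hM₂ : ∀ x : L, x ∈ A → x ∈ M → x = 0)
    (hK₁ : ∀ x : L, ∃ a ∈ A, ∃ m ∈ K, x = a + m)
    (hK₂ : ∀ x : L, x ∈ A → x ∈ K → x = 0)
    (hcore : lieCore F L M ≠ lieCore F L K) :
    (M ⊓ K < M ∧ ∀ S : LieSubalgebra F L, M ⊓ K < S → S ≤ M → S = M) ∧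
    (M ⊓ K < K ∧ ∀ S : LieSubalgebra F L, M ⊓ K < S → S ≤ K → S = K) :=
  inter_maximal_of_nonconjugate_complements_general F L A hA M K hM₁ hM₂ hK₁ hK₂ hcore
end
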